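/- arXiv:math/0208081 — 7 statements merged into one kernel-verified Lean document; each statement's English description precedes it below -/
import Mathlib

section
/- Let α be a 2-cocycle on a group G with values in kˣ and set ε(g,h) := α(g,h)·α(g*h*g⁻¹, g)⁻¹. Then for all g, h ∈ G, writing [g,h] = g*h*g⁻¹*h⁻¹ for the commutator: α([g,h], h*g*h⁻¹)·ε(h,g) = α([g,h], h)·ε(g⁻¹, g*h*g⁻¹). -/
/-!
Put `c = [g, h]`, `x = h g h⁻¹` and `y = g h g⁻¹`. The cocycle identities at `(c, x, h)` and
`(c, h, g)` both involve `α(c, hg)`, because `c x = g` and `c h = y`; eliminating it gives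
`α(c, x) ε(h, g) = α(c, h) ε(g, h)⁻¹`. It remains to see `ε(g⁻¹, y) = ε(g, h)⁻¹`, which follows from
the cocycle identities at `(g⁻¹, y, g)`, `(h, g⁻¹, g)` and `(g⁻¹, g, h)`: the last two both compute
`α(g⁻¹, g) α(1, 1)`.
-/

section

variable {G M : Type*} [Group G] [CommGroup M]

def IsTwoCocycle (α : G → G → M) : Prop :=
  ∀ g h l : G, α g h * α (g * h) l = α h l * α g (h * l)

/-- `ε(g, h)`, comparing the two factorizations `g h = (g h g⁻¹) g`. -/
def commFactor (α : G → G → M) (g h : G) : M :=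
  α g h / α (g * h * g⁻¹) g

namespace IsTwoCocycle

variable {α : G → G → M} (hα : IsTwoCocycle α)
include hα

theorem apply_one_left (h : G) : α 1 h = α 1 1 := by
  simpa only [one_mul, mul_left_inj] using (hα 1 1 h).symm

theorem apply_one_right (h : G) : α h 1 = α 1 1 := by
  simpa only [mul_one, mul_left_inj] using hα h 1 1

theorem apply_mul_apply_mul_inv (g h : G) : α h g⁻¹ * α (h * g⁻¹) g = α g⁻¹ g * α 1 1 := by
  rw [hα h g⁻¹ g, inv_mul_cancel, hα.apply_one_right]

theorem apply_mul_apply_inv_mul (g h : G) : α g h * α g⁻¹ (g * h) = α g⁻¹ g * α 1 1 := by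
  rw [← hα g⁻¹ g h, inv_mul_cancel, hα.apply_one_left]

theorem commFactor_inv_conj (g h : G) :
    commFactor α g⁻¹ (g * h * g⁻¹) = (commFactor α g h)⁻¹ := by
  have hconj : g⁻¹ * (g * h * g⁻¹) * g⁻¹⁻¹ = h := by group
  have hcoc := hα g⁻¹ (g * h * g⁻¹) g
  rw [show g⁻¹ * (g * h * g⁻¹) = h * g⁻¹ by group, show g * h * g⁻¹ * g = g * h by group] at hcoc
  rw [commFactor, commFactor, hconj, inv_div, div_eq_div_iff_mul_eq_mul]
  apply mul_right_cancel (b := α (h * g⁻¹) g)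
  calc α g⁻¹ (g * h * g⁻¹) * α g h * α (h * g⁻¹) g
      = α (g * h * g⁻¹) g * (α g h * α g⁻¹ (g * h)) := by rw [mul_right_comm, hcoc]; ac_rfl
    _ = α (g * h * g⁻¹) g * (α h g⁻¹ * α (h * g⁻¹) g) := by
        rw [hα.apply_mul_apply_inv_mul, hα.apply_mul_apply_mul_inv]
    _ = α (g * h * g⁻¹) g * α h g⁻¹ * α (h * g⁻¹) g := (mul_assoc _ _ _).symm

theorem apply_commutator_mul_commFactor (g h : G) :
    α (g * h * g⁻¹ * h⁻¹) (h * g * h⁻¹) * commFactor α h g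
      = α (g * h * g⁻¹ * h⁻¹) h * (commFactor α g h)⁻¹ := by
  have hcoc₁ := hα (g * h * g⁻¹ * h⁻¹) (h * g * h⁻¹) h
  have hcoc₂ := hα (g * h * g⁻¹ * h⁻¹) h g
  rw [show g * h * g⁻¹ * h⁻¹ * (h * g * h⁻¹) = g by group,
    show h * g * h⁻¹ * h = h * g by group] at hcoc₁
  rw [show g * h * g⁻¹ * h⁻¹ * h = g * h * g⁻¹ by group] at hcoc₂
  rw [commFactor, commFactor, inv_div, ← mul_div_assoc, ← mul_div_assoc,
    div_eq_div_iff_mul_eq_mul, mul_right_comm _ (α h g), hcoc₁, hcoc₂]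
  ac_rfl

end IsTwoCocycle

end

/-- For a 2-cocycle `α : G → G → kˣ` and `ε(g,h) := α(g,h) · α(g*h*g⁻¹,g)⁻¹`,
writing `[g,h] = g*h*g⁻¹*h⁻¹` for the commutator:
`α([g,h], h*g*h⁻¹) · ε(h,g) = α([g,h], h) · ε(g⁻¹, g*h*g⁻¹)`. -/
theorem epsilon_trace_relation {G : Type*} [Group G] {k : Type*} [Field k]
    (α : G → G → kˣ)
    (hcoc : ∀ g h l : G, α g h * α (g * h) l = α h l * α g (h * l))
    (ε : G → G → kˣ) (hε : ∀ g h : G, ε g h = α g h * (α (g * h * g⁻¹) g)⁻¹) :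
    ∀ g h : G,
      α (g * h * g⁻¹ * h⁻¹) (h * g * h⁻¹) * ε h g
        = α (g * h * g⁻¹ * h⁻¹) h * ε g⁻¹ (g * h * g⁻¹) := by
  have hε_commFactor : ε = commFactor α := by
    funext g h
    rw [hε, commFactor, div_eq_mul_inv]
  intro g h
  have hα : IsTwoCocycle α := hcoc
  rw [hε_commFactor, hα.commFactor_inv_conj]
  exact hα.apply_commutator_mul_commFactor g h
end

section
/- Let α be a 2-cocycle on a group G with values in kˣ and set ε(g,h) := α(g,h)·α(g*h*g⁻¹, g)⁻¹. Suppose g, h, g₁, g₂ ∈ G pairwise commute. Then: (i) ε(g,e) = ε(g,g) = 1; (ii) ε(g₁*g₂, h) = ε(g₁,h)·ε(g₂,h); (iii) ε(g⁻¹, h) = ε(g,h)⁻¹; (iv) ε(g,h) = ε(h⁻¹,g) = ε(h,g)⁻¹; (v) ε(h, g₁*g₂) = ε(h,g₁)·ε(h,g₂). In particular ε restricts to a bi-character (multiplicative in each variable, with ε(g,h)·ε(h,g) = 1) on pairs of commuting elements. -/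
/-!
For commuting `g, h` we have `g * h * g⁻¹ = h`, so `ε(g,h) = α(g,h) / α(h,g)`; this makes
`ε(g,g) = 1` and `ε(g,h) * ε(h,g) = 1` immediate. The cocycle identity at `(x,1,1)` and `(1,1,x)`
gives `α(x,1) = α(1,x) = α(1,1)`, hence `ε(g,1) = ε(1,h) = 1`. Multiplicativity in the first
variable comes from the cocycle identity at `(a,b,c)`, `(a,c,b)` and `(c,a,b)`; the inverse rule
and multiplicativity in the second variable then follow formally from antisymmetry.
-/

section

variable {G M : Type*} [Group G] [CommGroup M]

def IsCocycle₂ (α : G → G → M) : Prop :=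
  ∀ g h l : G, α g h * α (g * h) l = α h l * α g (h * l)

def cocycleEpsilon (α : G → G → M) (g h : G) : M :=
  α g h * (α (g * h * g⁻¹) g)⁻¹

section Commute

variable {α : G → G → M} {g h : G}

theorem cocycleEpsilon_of_commute (hgh : Commute g h) :
    cocycleEpsilon α g h = α g h / α h g := by
  rw [cocycleEpsilon, hgh.eq, mul_inv_cancel_right, div_eq_mul_inv]

theorem cocycleEpsilon_self (g : G) : cocycleEpsilon α g g = 1 := by
  rw [cocycleEpsilon_of_commute (Commute.refl g), div_self']

theorem cocycleEpsilon_mul_cocycleEpsilon_swap (hgh : Commute g h) :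
    cocycleEpsilon α g h * cocycleEpsilon α h g = 1 := by
  rw [cocycleEpsilon_of_commute hgh, cocycleEpsilon_of_commute hgh.symm, div_mul_div_cancel,
    div_self']

theorem cocycleEpsilon_swap (hgh : Commute g h) :
    cocycleEpsilon α h g = (cocycleEpsilon α g h)⁻¹ :=
  (inv_eq_of_mul_eq_one_right (cocycleEpsilon_mul_cocycleEpsilon_swap hgh)).symm

end Commute

namespace IsCocycle₂

variable {α : G → G → M} (hα : IsCocycle₂ α)
include hα

theorem apply_one_left (g : G) : α 1 g = α 1 1 := by
  have := hα 1 1 g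
  simp only [one_mul] at this
  exact (mul_right_cancel this).symm

theorem apply_one_right (g : G) : α g 1 = α 1 1 := by
  have := hα g 1 1
  simp only [mul_one] at this
  exact mul_left_cancel (this.trans (mul_comm _ _))

theorem cocycleEpsilon_one_right (g : G) : cocycleEpsilon α g 1 = 1 := by
  rw [cocycleEpsilon_of_commute (Commute.one_right g), hα.apply_one_left, hα.apply_one_right,
    div_self']

theorem cocycleEpsilon_one_left (g : G) : cocycleEpsilon α 1 g = 1 := by
  rw [cocycleEpsilon_swap (Commute.one_right g), hα.cocycleEpsilon_one_right, inv_one]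

theorem div_swap_mul_left {a b c : G} (hac : Commute a c) (hbc : Commute b c) :
    α (a * b) c / α c (a * b) = α a c / α c a * (α b c / α c b) := by
  have hacb : α a (c * b) / α (a * c) b = α a c / α c b :=
    div_eq_div_iff_mul_eq_mul.2 (by rw [mul_comm, ← hα, mul_comm])
  calc α (a * b) c / α c (a * b)
      = α a b * α (a * b) c / (α a b * α c (a * b)) := (mul_div_mul_left_eq_div _ _ _).symm
    _ = α b c * α a (c * b) / (α c a * α (a * c) b) := by
        rw [hα, ← hα c, hbc.eq, hac.eq]
    _ = α b c * (α a (c * b) / α (a * c) b) / α c a := by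
        simp only [div_eq_mul_inv, mul_inv]; ac_rfl
    _ = α a c / α c a * (α b c / α c b) := by
        rw [hacb]; simp only [div_eq_mul_inv]; ac_rfl

theorem cocycleEpsilon_mul_left {a b c : G} (hac : Commute a c) (hbc : Commute b c) :
    cocycleEpsilon α (a * b) c = cocycleEpsilon α a c * cocycleEpsilon α b c := by
  rw [cocycleEpsilon_of_commute (hac.mul_left hbc), cocycleEpsilon_of_commute hac,
    cocycleEpsilon_of_commute hbc, hα.div_swap_mul_left hac hbc]

theorem cocycleEpsilon_mul_right {a b c : G} (hca : Commute c a) (hcb : Commute c b) :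
    cocycleEpsilon α c (a * b) = cocycleEpsilon α c a * cocycleEpsilon α c b := by
  rw [cocycleEpsilon_swap (hca.mul_right hcb).symm, hα.cocycleEpsilon_mul_left hca.symm hcb.symm,
    mul_inv, ← cocycleEpsilon_swap hca.symm, ← cocycleEpsilon_swap hcb.symm]

theorem cocycleEpsilon_inv_left {g h : G} (hgh : Commute g h) :
    cocycleEpsilon α g⁻¹ h = (cocycleEpsilon α g h)⁻¹ := by
  refine (inv_eq_of_mul_eq_one_right ?_).symm
  rw [← hα.cocycleEpsilon_mul_left hgh hgh.inv_left, mul_inv_cancel, hα.cocycleEpsilon_one_left]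

end IsCocycle₂

end

theorem epsilon_bicharacter_general {G : Type*} [Group G] {k : Type*} [Field k]
    (α : G → G → kˣ)
    (hcoc : ∀ g h l : G, α g h * α (g * h) l = α h l * α g (h * l))
    (ε : G → G → kˣ) (hε : ∀ g h : G, ε g h = α g h * (α (g * h * g⁻¹) g)⁻¹)
    (g h g₁ g₂ : G)
    (hgh : g * h = h * g)
    (hhg₁ : h * g₁ = g₁ * h) (hhg₂ : h * g₂ = g₂ * h) :
    (ε g 1 = 1 ∧ ε g g = 1) ∧
    (ε (g₁ * g₂) h = ε g₁ h * ε g₂ h) ∧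
    (ε g⁻¹ h = (ε g h)⁻¹) ∧
    (ε g h = ε h⁻¹ g ∧ ε g h = (ε h g)⁻¹) ∧
    (ε h (g₁ * g₂) = ε h g₁ * ε h g₂) ∧
    (ε g h * ε h g = 1) := by
  obtain rfl : ε = cocycleEpsilon α := funext₂ hε
  have hα : IsCocycle₂ α := hcoc
  have hgh : Commute g h := hgh
  have hhg₁ : Commute h g₁ := hhg₁
  have hhg₂ : Commute h g₂ := hhg₂
  have hswap : cocycleEpsilon α g h = (cocycleEpsilon α h g)⁻¹ := by
    rw [cocycleEpsilon_swap hgh, inv_inv]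
  refine ⟨⟨hα.cocycleEpsilon_one_right g, cocycleEpsilon_self g⟩,
    hα.cocycleEpsilon_mul_left hhg₁.symm hhg₂.symm, hα.cocycleEpsilon_inv_left hgh,
    ⟨?_, hswap⟩, hα.cocycleEpsilon_mul_right hhg₁ hhg₂,
    cocycleEpsilon_mul_cocycleEpsilon_swap hgh⟩
  rw [hα.cocycleEpsilon_inv_left hgh.symm, hswap]

/-- For a 2-cocycle `α : G → G → kˣ` and `ε(g,h) := α(g,h) · α(g*h*g⁻¹,g)⁻¹`,
if `g, h, g₁, g₂` pairwise commute then: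
(i) `ε(g,e) = ε(g,g) = 1`; (ii) `ε(g₁*g₂,h) = ε(g₁,h)·ε(g₂,h)`; (iii) `ε(g⁻¹,h) = ε(g,h)⁻¹`;
(iv) `ε(g,h) = ε(h⁻¹,g) = ε(h,g)⁻¹`; (v) `ε(h,g₁*g₂) = ε(h,g₁)·ε(h,g₂)`.
In particular `ε` is a bi-character on commuting elements, with `ε(g,h)·ε(h,g) = 1`. -/
theorem epsilon_bicharacter {G : Type*} [Group G] {k : Type*} [Field k]
    (α : G → G → kˣ)
    (hcoc : ∀ g h l : G, α g h * α (g * h) l = α h l * α g (h * l))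
    (ε : G → G → kˣ) (hε : ∀ g h : G, ε g h = α g h * (α (g * h * g⁻¹) g)⁻¹)
    (g h g₁ g₂ : G)
    (hgh : g * h = h * g) (hgg₁ : g * g₁ = g₁ * g) (hgg₂ : g * g₂ = g₂ * g)
    (hhg₁ : h * g₁ = g₁ * h) (hhg₂ : h * g₂ = g₂ * h) (hg₁g₂ : g₁ * g₂ = g₂ * g₁) :
    (ε g 1 = 1 ∧ ε g g = 1) ∧
    (ε (g₁ * g₂) h = ε g₁ h * ε g₂ h) ∧
    (ε g⁻¹ h = (ε g h)⁻¹) ∧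
    (ε g h = ε h⁻¹ g ∧ ε g h = (ε h g)⁻¹) ∧
    (ε h (g₁ * g₂) = ε h g₁ * ε h g₂) ∧
    (ε g h * ε h g = 1) :=
  epsilon_bicharacter_general α hcoc ε hε g h g₁ g₂ hgh hhg₁ hhg₂
end

section
/- Let G be a finite group, k a field of characteristic 0, and α a normalized 2-cocycle on G with values in kˣ. Then the twisted group ring k^α[G], equipped with: the G-grading (k^α[G])_g = k·ĝ; the multiplication ĝ·ĥ = α(g,h)·(g*h)^; the unit ê; the bilinear form η determined by η(ĝ, ĥ) = α(g,g⁻¹) if h = g⁻¹ and 0 otherwise; the G-action φ_g(ĥ) = ε(g,h)·(g*h*g⁻¹)^ where ε(g,h) = α(g,h)·α(g*h*g⁻¹,g)⁻¹; and the trivial character χ ≡ 1; is a G-Frobenius algebra. -/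
/-- A `G`-Frobenius algebra over a field `k` of characteristic zero (Kaufmann):
a finite-dimensional `G`-graded `k`-vector space `A = ⊕_g A_g` (the grading given by
submodules together with the projections onto them), with an associative bilinear
multiplication respecting the grading, unit `1 ∈ A_e`, a nondegenerate graded invariant
bilinear form `η`, a `G`-action `φ` by algebra automorphisms with
`φ_g(A_h) ⊆ A_{g h g⁻¹}`, and a character `χ : G → kˣ`, satisfying twisted
commutativity, projective self-invariance, projective invariance of the metric and the
projective trace axiom. -/
structure GFrobeniusAlgebra (G : Type) [Group G] [Fintype G]
    (k : Type) [Field k] [CharZero k]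
    (A : Type) [AddCommGroup A] [Module k A] : Type where
  grading : G → Submodule k A
  proj : G → A →ₗ[k] A
  proj_mem : ∀ (g : G) (a : A), proj g a ∈ grading g
  proj_of_mem : ∀ (g : G), ∀ a ∈ grading g, proj g a = a
  proj_of_ne : ∀ (g h : G), g ≠ h → ∀ a ∈ grading g, proj h a = 0
  sum_proj : ∀ a : A, (∑ g : G, proj g a) = a
  finiteDim : FiniteDimensional k A
  mul : A →ₗ[k] A →ₗ[k] A
  mul_assoc' : ∀ a b c : A, mul (mul a b) c = mul a (mul b c)
  one : A
  one_mem : one ∈ grading 1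
  one_mul' : ∀ a : A, mul one a = a
  mul_one' : ∀ a : A, mul a one = a
  mul_mem : ∀ (g h : G), ∀ a ∈ grading g, ∀ b ∈ grading h, mul a b ∈ grading (g * h)
  η : A →ₗ[k] A →ₗ[k] k
  η_nondeg : ∀ a : A, (∀ b : A, η a b = 0) → a = 0
  η_graded : ∀ (g h : G), g * h ≠ 1 → ∀ a ∈ grading g, ∀ b ∈ grading h, η a b = 0
  η_invariant : ∀ a b c : A, η a (mul b c) = η (mul a b) c
  φ : G → A →ₗ[k] A
  φ_one : φ 1 = LinearMap.id
  φ_mul : ∀ g h : G, φ (g * h) = φ g ∘ₗ φ h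
  φ_algebra : ∀ (g : G) (a b : A), φ g (mul a b) = mul (φ g a) (φ g b)
  φ_unit : ∀ g : G, φ g one = one
  φ_grading : ∀ (g h : G), ∀ a ∈ grading h, φ g a ∈ grading (g * h * g⁻¹)
  χ : G →* kˣ
  twisted_comm : ∀ (g : G), ∀ a ∈ grading g, ∀ b : A, mul a b = mul (φ g b) a
  self_invariance : ∀ (g : G), ∀ a ∈ grading g, φ g a = (((χ g)⁻¹ : kˣ) : k) • a
  metric_invariance : ∀ (g : G) (a b : A),
    η (φ g a) (φ g b) = ((((χ g)⁻¹ : kˣ) : k)) ^ 2 * η a b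
  trace_axiom : ∀ (g h : G), ∀ c ∈ grading (g * h * g⁻¹ * h⁻¹),
    ((χ h : kˣ) : k) * LinearMap.trace k A (proj g ∘ₗ mul c ∘ₗ φ h ∘ₗ proj g)
      = ((χ g⁻¹ : kˣ) : k) * LinearMap.trace k A (proj h ∘ₗ φ g⁻¹ ∘ₗ mul c ∘ₗ proj h)

/-- The multiplication of the twisted group ring `k^α[G]` on `G →₀ k`
(basis `ĝ = Finsupp.single g 1`), determined bilinearly by `ĝ · ĥ = α(g,h) • (g*h)^`. -/
noncomputable def twistedMul {G : Type} [Group G] {k : Type} [Field k]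
    (α : G → G → kˣ) (f₁ f₂ : G →₀ k) : G →₀ k :=
  f₁.sum fun x a => f₂.sum fun y b => Finsupp.single (x * y) (a * b * (α x y : k))

set_option linter.unusedSectionVars false
set_option linter.unusedRCasesPattern false

namespace TGRaux

variable {G : Type} [Group G] {k : Type} [Field k]

/-- bilinear twisted multiplication (fintype version) -/
noncomputable def tMul [Fintype G] (α : G → G → kˣ) :
    (G →₀ k) →ₗ[k] (G →₀ k) →ₗ[k] (G →₀ k) :=
  LinearMap.mk₂ k
    (fun a b => ∑ x : G, ∑ y : G, Finsupp.single (x * y) (a x * b y * (α x y : k)))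
    (fun a a' b => by
      rw [← Finset.sum_add_distrib]
      refine Finset.sum_congr rfl fun x _ => ?_
      rw [← Finset.sum_add_distrib]
      refine Finset.sum_congr rfl fun y _ => ?_
      rw [Finsupp.add_apply, add_mul, add_mul, Finsupp.single_add])
    (fun c a b => by
      rw [Finset.smul_sum]
      refine Finset.sum_congr rfl fun x _ => ?_
      rw [Finset.smul_sum]
      refine Finset.sum_congr rfl fun y _ => ?_
      rw [Finsupp.smul_single', Finsupp.smul_apply, smul_eq_mul]
      congr 1
      ring)
    (fun a b b' => by
      rw [← Finset.sum_add_distrib]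
      refine Finset.sum_congr rfl fun x _ => ?_
      rw [← Finset.sum_add_distrib]
      refine Finset.sum_congr rfl fun y _ => ?_
      rw [Finsupp.add_apply, mul_add, add_mul, Finsupp.single_add])
    (fun c a b => by
      rw [Finset.smul_sum]
      refine Finset.sum_congr rfl fun x _ => ?_
      rw [Finset.smul_sum]
      refine Finset.sum_congr rfl fun y _ => ?_
      rw [Finsupp.smul_single', Finsupp.smul_apply, smul_eq_mul]
      congr 1
      ring)

lemma tMul_single [Fintype G] [DecidableEq G] (α : G → G → kˣ) (g h : G) (a b : k) :
    tMul α (Finsupp.single g a) (Finsupp.single h b)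
      = Finsupp.single (g * h) (a * b * (α g h : k)) := by
  simp only [tMul, LinearMap.mk₂_apply]
  rw [Finset.sum_eq_single g]
  · rw [Finset.sum_eq_single h]
    · simp
    · intro y _ hy
      rw [Finsupp.single_eq_of_ne' (Ne.symm hy)]
      simp
    · simp
  · intro x _ hx
    apply Finset.sum_eq_zero; intro y _
    rw [Finsupp.single_eq_of_ne' (Ne.symm hx)]
    simp
  · simp

lemma tMul_eq_twistedMul [Fintype G] (α : G → G → kˣ) (f₁ f₂ : G →₀ k) :
    tMul α f₁ f₂ = twistedMul α f₁ f₂ := by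
  rw [twistedMul, Finsupp.sum_fintype _ _ (fun x => by simp)]
  simp only [tMul, LinearMap.mk₂_apply]
  refine Finset.sum_congr rfl fun x _ => ?_
  rw [Finsupp.sum_fintype _ _ (fun y => by simp)]

section cocycle
variable (α : G → G → kˣ) (hcoc : ∀ g h l : G, α g h * α (g * h) l = α h l * α g (h * l))
  (hnorm : α 1 1 = 1)

include hcoc hnorm in
lemma alpha_one_left (g : G) : α 1 g = 1 := by
  have h := hcoc 1 1 g
  rw [hnorm, one_mul, one_mul, one_mul] at h
  exact (mul_left_cancel (a := α 1 g) (by rw [mul_one, ← h])).symm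

include hcoc hnorm in
lemma alpha_one_right (g : G) : α g 1 = 1 := by
  have h := hcoc g 1 1
  rw [hnorm, mul_one, mul_one, one_mul] at h
  exact mul_left_cancel (a := α g 1) (by rw [mul_one, h])

include hcoc hnorm in
lemma alpha_inv_comm (g : G) : α g g⁻¹ = α g⁻¹ g := by
  have h := hcoc g g⁻¹ g
  rw [mul_inv_cancel, inv_mul_cancel, alpha_one_left α hcoc hnorm,
    alpha_one_right α hcoc hnorm, mul_one, mul_one] at h
  exact h

include hcoc hnorm in
lemma alpha_conj_key (g h : G) : α (g * h * g⁻¹) g * α (g * h) g⁻¹ = α g g⁻¹ := by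
  have h6 := hcoc (g * h * g⁻¹) g g⁻¹
  rw [inv_mul_cancel_right, mul_inv_cancel, alpha_one_right α hcoc hnorm, mul_one] at h6
  exact h6

end cocycle

/-- conjugation action -/
noncomputable def tPhi [Fintype G] (α : G → G → kˣ) (g : G) :
    (G →₀ k) →ₗ[k] (G →₀ k) :=
  ((tMul α).flip (Finsupp.single g⁻¹ ((α g g⁻¹ : k)⁻¹))).comp
    (tMul α (Finsupp.single g 1))

section main
variable [Fintype G] [DecidableEq G] (α : G → G → kˣ)
  (hcoc : ∀ g h l : G, α g h * α (g * h) l = α h l * α g (h * l))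
  (hnorm : α 1 1 = 1)

include hcoc hnorm in
lemma tPhi_single (g h : G) (b : k) :
    tPhi α g (Finsupp.single h b)
      = Finsupp.single (g * h * g⁻¹) (b * (α g h : k) * ((α (g * h * g⁻¹) g : k))⁻¹) := by
  simp only [tPhi, LinearMap.comp_apply, LinearMap.flip_apply, tMul_single]
  congr 1
  have hk : (α (g * h * g⁻¹) g : k) * (α (g * h) g⁻¹ : k) = (α g g⁻¹ : k) := by
    exact_mod_cast congrArg Units.val (alpha_conj_key α hcoc hnorm g h)
  have h2 : (α (g * h) g⁻¹ : k) ≠ 0 := Units.ne_zero _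
  have hinv : ((α (g * h * g⁻¹) g : k))⁻¹
      = (α g g⁻¹ : k)⁻¹ * (α (g * h) g⁻¹ : k) := by
    rw [← hk, mul_inv, inv_mul_cancel_right₀ h2]
  rw [hinv]
  ring

include hcoc in
lemma tMul_assoc (a b c : G →₀ k) :
    tMul α (tMul α a b) c = tMul α a (tMul α b c) := by
  induction a using Finsupp.induction_linear with
  | zero => simp
  | add f f' hf hf' => simp [map_add, LinearMap.add_apply, hf, hf']
  | single g₁ a₁ =>
    induction b using Finsupp.induction_linear with
    | zero => simp
    | add f f' hf hf' => simp [map_add, LinearMap.add_apply, hf, hf']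
    | single g₂ a₂ =>
      induction c using Finsupp.induction_linear with
      | zero => simp
      | add f f' hf hf' => simp [map_add, LinearMap.add_apply, hf, hf']
      | single g₃ a₃ =>
        simp only [tMul_single]
        rw [mul_assoc g₁ g₂ g₃]
        congr 1
        have hk : (α g₁ g₂ : k) * α (g₁ * g₂) g₃ = (α g₂ g₃ : k) * α g₁ (g₂ * g₃) := by
          exact_mod_cast congrArg Units.val (hcoc g₁ g₂ g₃)
        linear_combination (a₁ * a₂ * a₃) * hk

include hcoc hnorm in
lemma tOne_mul (a : G →₀ k) : tMul α (Finsupp.single 1 1) a = a := by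
  induction a using Finsupp.induction_linear with
  | zero => simp
  | add f f' hf hf' => simp [map_add, hf, hf']
  | single g b =>
    rw [tMul_single]
    rw [alpha_one_left α hcoc hnorm g, Units.val_one]
    simp

include hcoc hnorm in
lemma tMul_one (a : G →₀ k) : tMul α a (Finsupp.single 1 1) = a := by
  induction a using Finsupp.induction_linear with
  | zero => simp
  | add f f' hf hf' => simp [map_add, LinearMap.add_apply, hf, hf']
  | single g b =>
    rw [tMul_single]
    rw [alpha_one_right α hcoc hnorm g, Units.val_one]
    simp

end main

section more
variable [Fintype G] [DecidableEq G] (α : G → G → kˣ)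
  (hcoc : ∀ g h l : G, α g h * α (g * h) l = α h l * α g (h * l))
  (hnorm : α 1 1 = 1)

lemma mem_grade_iff {g : G} {a : G →₀ k} :
    a ∈ Submodule.span k {Finsupp.single g (1 : k)} ↔ ∃ c : k, a = Finsupp.single g c := by
  rw [Submodule.mem_span_singleton]
  constructor
  · rintro ⟨c, rfl⟩; exact ⟨c, by rw [Finsupp.smul_single', mul_one]⟩
  · rintro ⟨c, rfl⟩; exact ⟨c, by rw [Finsupp.smul_single', mul_one]⟩

lemma single_mem_grade (g : G) (c : k) :
    Finsupp.single g c ∈ Submodule.span k {Finsupp.single g (1 : k)} :=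
  (mem_grade_iff).2 ⟨c, rfl⟩

lemma sum_single_apply (f : G →₀ k) : ∑ g : G, Finsupp.single g (f g) = f := by
  ext x
  rw [Finsupp.finset_sum_apply]
  simp [Finsupp.single_apply, Finset.sum_ite_eq']

include hcoc hnorm in
lemma tPhi_one : tPhi (k := k) α (1 : G) = LinearMap.id := by
  apply Finsupp.lhom_ext
  intro h b
  rw [LinearMap.id_apply, tPhi_single α hcoc hnorm]
  rw [alpha_one_left α hcoc hnorm h]
  have : (1 : G) * h * (1 : G)⁻¹ = h := by group
  rw [this, alpha_one_right α hcoc hnorm h]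
  simp

include hcoc hnorm in
lemma tPhi_apply_one (g : G) (a : G →₀ k) : (tPhi α g a) 1 = a 1 := by
  induction a using Finsupp.induction_linear with
  | zero => simp
  | add f f' hf hf' => simp [map_add, Finsupp.add_apply, hf, hf']
  | single h b =>
    rw [tPhi_single α hcoc hnorm]
    by_cases hh : h = 1
    · subst hh
      have h1 : g * 1 * g⁻¹ = 1 := by group
      rw [h1, alpha_one_right α hcoc hnorm, alpha_one_left α hcoc hnorm]
      simp
    · have h1 : g * h * g⁻¹ ≠ 1 := by
        intro hc
        apply hh
        have : g⁻¹ * (g * h * g⁻¹) * g = g⁻¹ * 1 * g := by rw [hc]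
        simpa [mul_assoc] using this
      rw [Finsupp.single_eq_of_ne' h1, Finsupp.single_eq_of_ne' hh]

include hcoc hnorm in
lemma tMul_single_inv_apply_one (a : G →₀ k) (h : G) :
    (tMul α a (Finsupp.single h⁻¹ 1)) 1 = a h * (α h h⁻¹ : k) := by
  induction a using Finsupp.induction_linear with
  | zero => simp
  | add f f' hf hf' => simp [map_add, LinearMap.add_apply, Finsupp.add_apply, hf, hf', add_mul]
  | single g c =>
    rw [tMul_single]
    by_cases hg : g = h
    · subst hg
      rw [mul_inv_cancel]
      simp
    · have h1 : g * h⁻¹ ≠ 1 := by simpa [mul_inv_eq_one] using hg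
      rw [Finsupp.single_eq_of_ne' h1, Finsupp.single_eq_of_ne' hg]
      simp

end more


section phimul
variable [Fintype G] [DecidableEq G] (α : G → G → kˣ)
  (hcoc : ∀ g h l : G, α g h * α (g * h) l = α h l * α g (h * l))
  (hnorm : α 1 1 = 1)

include hcoc hnorm in
lemma tPhi_mul (g h : G) :
    tPhi (k := k) α (g * h) = (tPhi α g).comp (tPhi α h) := by
  apply Finsupp.lhom_ext
  intro l b
  rw [LinearMap.comp_apply, tPhi_single α hcoc hnorm, tPhi_single α hcoc hnorm,
    tPhi_single α hcoc hnorm]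
  rw [show g * h * l * (g * h)⁻¹ = g * (h * l * h⁻¹) * g⁻¹ from by group]
  congr 1
  -- cocycle consequences
  have e1 := congrArg (Units.val (α := k)) (hcoc g h l)
  have e2' := hcoc g (h * l * h⁻¹) h
  rw [inv_mul_cancel_right] at e2'
  have e2 := congrArg (Units.val (α := k)) e2'
  have e3' := hcoc (g * (h * l * h⁻¹) * g⁻¹) g h
  rw [inv_mul_cancel_right] at e3'
  have e3 := congrArg (Units.val (α := k)) e3'
  push_cast at e1 e2 e3
  set a0 := (α g h : k) with ha0
  set a1 := (α (g * h) l : k) with ha1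
  set a2 := (α (g * (h * l * h⁻¹) * g⁻¹) (g * h) : k) with ha2
  set a3 := (α h l : k) with ha3
  set a4 := (α (h * l * h⁻¹) h : k) with ha4
  set a5 := (α g (h * l * h⁻¹) : k) with ha5
  set a6 := (α (g * (h * l * h⁻¹) * g⁻¹) g : k) with ha6
  set a7 := (α g (h * l) : k) with ha7
  set a8 := (α (g * (h * l * h⁻¹)) h : k) with ha8
  have n0 : a0 ≠ 0 := by rw [ha0]; exact Units.ne_zero _
  have n4 : a4 ≠ 0 := by rw [ha4]; exact Units.ne_zero _
  have n6 : a6 ≠ 0 := by rw [ha6]; exact Units.ne_zero _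
  have n8 : a8 ≠ 0 := by rw [ha8]; exact Units.ne_zero _
  have hA1 : a1 = a3 * a7 / a0 := by rw [eq_div_iff n0]; linear_combination e1
  have hA5 : a5 = a4 * a7 / a8 := by rw [eq_div_iff n8]; linear_combination e2
  have hA2 : a2 = a6 * a8 / a0 := by rw [eq_div_iff n0]; linear_combination -e3
  rw [hA1, hA5, hA2]
  field_simp

include hcoc hnorm in
lemma tPhi_algebra (g : G) (a b : G →₀ k) :
    tPhi α g (tMul α a b) = tMul α (tPhi α g a) (tPhi α g b) := by
  induction a using Finsupp.induction_linear with
  | zero => simp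
  | add f f' hf hf' => simp [map_add, LinearMap.add_apply, hf, hf']
  | single h c =>
    induction b using Finsupp.induction_linear with
    | zero => simp
    | add f f' hf hf' => simp [map_add, LinearMap.add_apply, hf, hf']
    | single l d =>
      rw [tMul_single, tPhi_single α hcoc hnorm, tPhi_single α hcoc hnorm,
        tPhi_single α hcoc hnorm, tMul_single]
      rw [show (g * h * g⁻¹) * (g * l * g⁻¹) = g * (h * l) * g⁻¹ from by group]
      congr 1
      have e1 := congrArg (Units.val (α := k)) (hcoc g h l)
      have e2' := hcoc (g * h * g⁻¹) g l
      rw [inv_mul_cancel_right] at e2'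
      have e2 := congrArg (Units.val (α := k)) e2'
      have e3' := hcoc (g * h * g⁻¹) (g * l * g⁻¹) g
      rw [inv_mul_cancel_right,
        show (g * h * g⁻¹) * (g * l * g⁻¹) = g * (h * l) * g⁻¹ from by group] at e3'
      have e3 := congrArg (Units.val (α := k)) e3'
      push_cast at e1 e2 e3
      set b1 := (α h l : k) with hb1
      set b2 := (α g (h * l) : k) with hb2
      set b3 := (α (g * (h * l) * g⁻¹) g : k) with hb3
      set b4 := (α g h : k) with hb4
      set b5 := (α (g * h * g⁻¹) g : k) with hb5
      set b6 := (α g l : k) with hb6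
      set b7 := (α (g * l * g⁻¹) g : k) with hb7
      set b8 := (α (g * h * g⁻¹) (g * l * g⁻¹) : k) with hb8
      set b9 := (α (g * h) l : k) with hb9
      set b10 := (α (g * h * g⁻¹) (g * l) : k) with hb10
      have n1 : b1 ≠ 0 := by rw [hb1]; exact Units.ne_zero _
      have n3 : b3 ≠ 0 := by rw [hb3]; exact Units.ne_zero _
      have n5 : b5 ≠ 0 := by rw [hb5]; exact Units.ne_zero _
      have n6 : b6 ≠ 0 := by rw [hb6]; exact Units.ne_zero _
      have n7 : b7 ≠ 0 := by rw [hb7]; exact Units.ne_zero _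
      have hB2 : b2 = b4 * b9 / b1 := by rw [eq_div_iff n1]; linear_combination -e1
      have hB8 : b8 = b7 * b10 / b3 := by rw [eq_div_iff n3]; linear_combination e3
      have hB10 : b10 = b5 * b9 / b6 := by rw [eq_div_iff n6]; linear_combination -e2
      rw [hB2, hB8, hB10]
      field_simp
end phimul

/-- projection onto the `g`-component -/
noncomputable def tProj (g : G) : (G →₀ k) →ₗ[k] (G →₀ k) :=
  (Finsupp.lsingle g).comp (Finsupp.lapply g)

lemma tProj_apply (g : G) (f : G →₀ k) : tProj g f = Finsupp.single g (f g) := rfl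

lemma trace_of_End_k (f : k →ₗ[k] k) : LinearMap.trace k k f = f 1 := by
  have hf : f = f 1 • LinearMap.id := by
    ext x
    rw [LinearMap.smul_apply, LinearMap.id_apply, smul_eq_mul, mul_comm, ← smul_eq_mul,
      ← map_smul, smul_eq_mul, mul_one]
  rw [hf, map_smul, LinearMap.trace_id, smul_eq_mul, Module.finrank_self]
  simp

lemma trace_tProj_conj [Fintype G] (g : G) (S : (G →₀ k) →ₗ[k] (G →₀ k)) :
    LinearMap.trace k (G →₀ k) ((tProj g).comp (S.comp (tProj g)))
      = (S (Finsupp.single g 1)) g := by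
  have h1 : (tProj g).comp (S.comp (tProj g))
      = (Finsupp.lsingle g).comp (((Finsupp.lapply g).comp (S.comp (tProj g)))) := by
    rw [tProj, LinearMap.comp_assoc]
  rw [h1, LinearMap.trace_comp_comm', trace_of_End_k]
  simp [tProj, Finsupp.single_eq_same]

section tracescalar
variable [Fintype G] [DecidableEq G] (α : G → G → kˣ)
  (hcoc : ∀ g h l : G, α g h * α (g * h) l = α h l * α g (h * l))
  (hnorm : α 1 1 = 1)

include hcoc hnorm in
lemma trace_scalar (g h : G) (s : k) :
    (tMul α (Finsupp.single (g * h * g⁻¹ * h⁻¹) s) (tPhi α h (Finsupp.single g 1))) g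
      = (tPhi α g⁻¹ (tMul α (Finsupp.single (g * h * g⁻¹ * h⁻¹) s) (Finsupp.single h 1))) h := by
  rw [tPhi_single α hcoc hnorm, tMul_single, tMul_single,
    show (g * h * g⁻¹ * h⁻¹) * h = g * h * g⁻¹ from by group,
    tPhi_single α hcoc hnorm,
    show (g * h * g⁻¹ * h⁻¹) * (h * g * h⁻¹) = g from by group,
    show g⁻¹ * (g * h * g⁻¹) * g⁻¹⁻¹ = h from by group,
    Finsupp.single_eq_same, Finsupp.single_eq_same]
  -- cocycle consequences
  have e1' := hcoc (g * h * g⁻¹ * h⁻¹) (h * g * h⁻¹) h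
  rw [show (g * h * g⁻¹ * h⁻¹) * (h * g * h⁻¹) = g from by group,
    inv_mul_cancel_right] at e1'
  have e1 := congrArg (Units.val (α := k)) e1'
  have e2' := hcoc (g * h * g⁻¹ * h⁻¹) h g
  rw [inv_mul_cancel_right] at e2'
  have e2 := congrArg (Units.val (α := k)) e2'
  have e3' := hcoc g⁻¹ g (h * g⁻¹)
  rw [inv_mul_cancel, alpha_one_left α hcoc hnorm, mul_one,
    ← mul_assoc, ← alpha_inv_comm α hcoc hnorm] at e3'
  have e3 := congrArg (Units.val (α := k)) e3'
  have e5 := congrArg (Units.val (α := k)) (hcoc g h g⁻¹)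
  have e6 := congrArg (Units.val (α := k)) (alpha_conj_key α hcoc hnorm g h)
  push_cast at e1 e2 e3 e5 e6
  set c1 := (α g h : k) with hc1
  set c2 := (α (g * h) g⁻¹ : k) with hc2
  set c3 := (α g (h * g⁻¹) : k) with hc3
  set c4 := (α g g⁻¹ : k) with hc4
  set c5 := (α (h * g * h⁻¹) h : k) with hc5
  set c6 := (α h g : k) with hc6
  set c7 := (α (g * h * g⁻¹ * h⁻¹) h : k) with hc7
  set c8 := (α (g * h * g⁻¹ * h⁻¹) (h * g * h⁻¹) : k) with hc8
  set c9 := (α g⁻¹ (g * h * g⁻¹) : k) with hc9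
  set c10 := (α h g⁻¹ : k) with hc10
  set c11 := (α (g * h * g⁻¹ * h⁻¹) (h * g) : k) with hc11
  set c12 := (α (g * h * g⁻¹) g : k) with hc12
  have n1 : c1 ≠ 0 := by rw [hc1]; exact Units.ne_zero _
  have n2 : c2 ≠ 0 := by rw [hc2]; exact Units.ne_zero _
  have n3 : c3 ≠ 0 := by rw [hc3]; exact Units.ne_zero _
  have n5 : c5 ≠ 0 := by rw [hc5]; exact Units.ne_zero _
  have n6 : c6 ≠ 0 := by rw [hc6]; exact Units.ne_zero _
  have hQ : c8 = c5 * c11 / c1 := by rw [eq_div_iff n1]; linear_combination e1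
  have hC11 : c11 = c7 * c12 / c6 := by rw [eq_div_iff n6]; linear_combination -e2
  have hC12 : c12 = c4 / c2 := by rw [eq_div_iff n2]; linear_combination e6
  have hV : c9 = c4 / c3 := by rw [eq_div_iff n3]; linear_combination -e3
  have hR : c10 = c1 * c2 / c3 := by rw [eq_div_iff n3]; linear_combination -e5
  rw [hQ, hC11, hC12, hV, hR]
  field_simp

end tracescalar

end TGRaux

/-- For a finite group `G` and a normalized 2-cocycle `α` with values in `kˣ`,
the twisted group ring `k^α[G]` — with grading `(k^α[G])_g = k·ĝ`, multiplication
`ĝ·ĥ = α(g,h)·(g*h)^`, unit `ê`, metric `η(ĝ,ĥ) = α(g,g⁻¹)` if `h = g⁻¹` and `0` otherwise,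
`G`-action `φ_g(ĥ) = ε(g,h)·(g*h*g⁻¹)^` with `ε(g,h) = α(g,h)·α(g*h*g⁻¹,g)⁻¹`, and trivial
character — is a `G`-Frobenius algebra. -/
theorem twisted_group_ring_is_GFrobenius (G : Type) [Group G] [Fintype G] [DecidableEq G]
    (k : Type) [Field k] [CharZero k] (α : G → G → kˣ)
    (hcoc : ∀ g h l : G, α g h * α (g * h) l = α h l * α g (h * l))
    (hnorm : α 1 1 = 1) :
    ∃ F : GFrobeniusAlgebra G k (G →₀ k),
      (∀ g : G, F.grading g = Submodule.span k {Finsupp.single g (1 : k)}) ∧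
      (∀ (g : G) (f : G →₀ k), F.proj g f = Finsupp.single g (f g)) ∧
      (∀ f₁ f₂ : G →₀ k, F.mul f₁ f₂ = twistedMul α f₁ f₂) ∧
      F.one = Finsupp.single 1 1 ∧
      (∀ g h : G, F.η (Finsupp.single g (1 : k)) (Finsupp.single h (1 : k))
          = if h = g⁻¹ then (α g g⁻¹ : k) else 0) ∧
      (∀ g h : G, F.φ g (Finsupp.single h (1 : k))
          = ((α g h * (α (g * h * g⁻¹) g)⁻¹ : kˣ) : k) • Finsupp.single (g * h * g⁻¹) (1 : k)) ∧
      (∀ g : G, F.χ g = 1) := by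
  classical
  refine ⟨{
    grading := fun g => Submodule.span k {Finsupp.single g (1 : k)}
    proj := fun g => TGRaux.tProj g
    proj_mem := fun g a => by
      rw [TGRaux.tProj_apply]; exact TGRaux.single_mem_grade g (a g)
    proj_of_mem := fun g a ha => by
      obtain ⟨c, rfl⟩ := TGRaux.mem_grade_iff.1 ha
      rw [TGRaux.tProj_apply, Finsupp.single_eq_same]
    proj_of_ne := fun g h hgh a ha => by
      obtain ⟨c, rfl⟩ := TGRaux.mem_grade_iff.1 ha
      rw [TGRaux.tProj_apply, Finsupp.single_eq_of_ne' hgh, Finsupp.single_zero]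
    sum_proj := fun a => by
      simp only [TGRaux.tProj_apply]
      exact TGRaux.sum_single_apply a
    finiteDim := inferInstance
    mul := TGRaux.tMul α
    mul_assoc' := fun a b c => TGRaux.tMul_assoc α hcoc a b c
    one := Finsupp.single 1 1
    one_mem := TGRaux.single_mem_grade 1 1
    one_mul' := TGRaux.tOne_mul α hcoc hnorm
    mul_one' := TGRaux.tMul_one α hcoc hnorm
    mul_mem := fun g h a ha b hb => by
      obtain ⟨c, rfl⟩ := TGRaux.mem_grade_iff.1 ha
      obtain ⟨d, rfl⟩ := TGRaux.mem_grade_iff.1 hb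
      rw [TGRaux.tMul_single]
      exact TGRaux.single_mem_grade _ _
    η := (TGRaux.tMul α).compr₂ (Finsupp.lapply 1)
    η_nondeg := fun a ha => by
      ext x
      have h1 := ha (Finsupp.single x⁻¹ 1)
      rw [LinearMap.compr₂_apply, Finsupp.lapply_apply,
        TGRaux.tMul_single_inv_apply_one α hcoc hnorm] at h1
      rcases mul_eq_zero.1 h1 with h2 | h2
      · simpa using h2
      · exact absurd h2 (Units.ne_zero _)
    η_graded := fun g h hne a ha b hb => by
      obtain ⟨c, rfl⟩ := TGRaux.mem_grade_iff.1 ha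
      obtain ⟨d, rfl⟩ := TGRaux.mem_grade_iff.1 hb
      rw [LinearMap.compr₂_apply, Finsupp.lapply_apply, TGRaux.tMul_single,
        Finsupp.single_eq_of_ne' hne]
    η_invariant := fun a b c => by
      simp only [LinearMap.compr₂_apply, Finsupp.lapply_apply]
      rw [TGRaux.tMul_assoc α hcoc]
    φ := TGRaux.tPhi α
    φ_one := TGRaux.tPhi_one α hcoc hnorm
    φ_mul := fun g h => TGRaux.tPhi_mul α hcoc hnorm g h
    φ_algebra := fun g a b => TGRaux.tPhi_algebra α hcoc hnorm g a b
    φ_unit := fun g => by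
      rw [TGRaux.tPhi_single α hcoc hnorm, show g * 1 * g⁻¹ = 1 from by group,
        TGRaux.alpha_one_right α hcoc hnorm, TGRaux.alpha_one_left α hcoc hnorm]
      simp
    φ_grading := fun g h a ha => by
      obtain ⟨c, rfl⟩ := TGRaux.mem_grade_iff.1 ha
      rw [TGRaux.tPhi_single α hcoc hnorm]
      exact TGRaux.single_mem_grade _ _
    χ := 1
    twisted_comm := fun g a ha b => by
      obtain ⟨c, rfl⟩ := TGRaux.mem_grade_iff.1 ha
      induction b using Finsupp.induction_linear with
      | zero => simp
      | add f f' hf hf' => simp [map_add, LinearMap.add_apply, hf, hf']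
      | single h d =>
        rw [TGRaux.tMul_single, TGRaux.tPhi_single α hcoc hnorm, TGRaux.tMul_single,
          inv_mul_cancel_right]
        congr 1
        set x := (α (g * h * g⁻¹) g : k) with hx
        set y := (α g h : k) with hy
        have nx : x ≠ 0 := by rw [hx]; exact Units.ne_zero _
        field_simp
    self_invariance := fun g a ha => by
      obtain ⟨c, rfl⟩ := TGRaux.mem_grade_iff.1 ha
      rw [TGRaux.tPhi_single α hcoc hnorm, show g * g * g⁻¹ = g from by group,
        mul_assoc, mul_inv_cancel₀ (Units.ne_zero _), mul_one]
      simp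
    metric_invariance := fun g a b => by
      simp only [LinearMap.compr₂_apply, Finsupp.lapply_apply]
      rw [← TGRaux.tPhi_algebra α hcoc hnorm, TGRaux.tPhi_apply_one α hcoc hnorm]
      simp
    trace_axiom := fun g h c hc => by
      obtain ⟨s, rfl⟩ := TGRaux.mem_grade_iff.1 hc
      simp only [MonoidHom.one_apply, inv_one, Units.val_one, one_mul]
      have eL : TGRaux.tProj g ∘ₗ
            TGRaux.tMul α (Finsupp.single (g * h * g⁻¹ * h⁻¹) s) ∘ₗ
              TGRaux.tPhi α h ∘ₗ TGRaux.tProj g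
          = (TGRaux.tProj g).comp
              (((TGRaux.tMul α (Finsupp.single (g * h * g⁻¹ * h⁻¹) s)).comp
                (TGRaux.tPhi α h)).comp (TGRaux.tProj (k := k) g)) := by
        rw [LinearMap.comp_assoc]
      have eR : TGRaux.tProj h ∘ₗ
            TGRaux.tPhi α g⁻¹ ∘ₗ
              TGRaux.tMul α (Finsupp.single (g * h * g⁻¹ * h⁻¹) s) ∘ₗ TGRaux.tProj h
          = (TGRaux.tProj h).comp
              (((TGRaux.tPhi α g⁻¹).comp
                (TGRaux.tMul α (Finsupp.single (g * h * g⁻¹ * h⁻¹) s))).comp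
                  (TGRaux.tProj (k := k) h)) := by
        rw [LinearMap.comp_assoc]
      rw [eL, eR, TGRaux.trace_tProj_conj, TGRaux.trace_tProj_conj]
      simp only [LinearMap.comp_apply]
      exact TGRaux.trace_scalar α hcoc hnorm g h s
  }, fun g => rfl, fun g f => rfl, TGRaux.tMul_eq_twistedMul α, rfl, ?_, ?_, fun g => rfl⟩
  · intro g h
    rw [LinearMap.compr₂_apply, Finsupp.lapply_apply, TGRaux.tMul_single]
    by_cases hh : h = g⁻¹
    · subst hh
      rw [mul_inv_cancel, Finsupp.single_eq_same, if_pos rfl, one_mul, one_mul]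
    · have hne : g * h ≠ 1 := fun e => hh ((inv_eq_iff_mul_eq_one.2 e).symm)
      rw [Finsupp.single_eq_of_ne' hne, if_neg hh]
  · intro g h
    rw [TGRaux.tPhi_single α hcoc hnorm, Finsupp.smul_single', Units.val_mul,
      Units.val_inv_eq_inv_val, mul_one, one_mul]
end

section
/- Let G be a finite group and k a field of characteristic 0. Let D(k[G]) be the k-vector space with basis {g⊗δ_x : g, x ∈ G} and multiplication determined k-bilinearly by (g⊗δ_x)·(h⊗δ_y) = (g*h ⊗ δ_y) if x = h*y*h⁻¹, and 0 otherwise. Then: (i) D(k[G]) is an associative unital k-algebra with unit Σ_{x∈G} e⊗δ_x (the Drinfeld double of the group algebra k[G]); and (ii) every G-Frobenius algebra A is a left D(k[G])-module under the action (g⊗δ_x)·a := φ_g(a_x), where a_x denotes the A_x-component of a ∈ A = ⊕_{y∈G} A_y. -/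
/-- The multiplication of the Drinfeld double `D(k[G])` on the space `(G × G) →₀ k`
with basis `g ⊗ δ_x = Finsupp.single (g, x) 1`, determined bilinearly by
`(g⊗δ_x)·(h⊗δ_y) = g*h ⊗ δ_y` if `x = h*y*h⁻¹` and `0` otherwise. -/
noncomputable def doubleMul {G : Type} [Group G] [DecidableEq G] {k : Type} [Field k]
    (f₁ f₂ : (G × G) →₀ k) : (G × G) →₀ k :=
  f₁.sum fun p a => f₂.sum fun q b =>
    if p.2 = q.1 * q.2 * q.1⁻¹ then Finsupp.single (p.1 * q.1, q.2) (a * b) else 0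

/-- The unit `Σ_x e ⊗ δ_x` of the Drinfeld double `D(k[G])`. -/
noncomputable def doubleOne (G : Type) [Group G] [Fintype G] (k : Type) [Field k] :
    (G × G) →₀ k :=
  ∑ x : G, Finsupp.single ((1 : G), x) (1 : k)

/-- The action of the Drinfeld double `D(k[G])` on a `G`-Frobenius algebra `A`:
`(g ⊗ δ_x) · a := φ_g(a_x)`, where `a_x` is the `A_x`-component of `a`. -/
noncomputable def doubleAct {G : Type} [Group G] [Fintype G] {k : Type} [Field k]
    [CharZero k] {A : Type} [AddCommGroup A] [Module k A]
    (F : GFrobeniusAlgebra G k A) (f : (G × G) →₀ k) (a : A) : A :=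
  f.sum fun p c => c • F.φ p.1 (F.proj p.2 a)

/-! Both the product of `D(k[G])` and its action on `A` are bilinear, so each is the
linear extension of its values on basis vectors `g ⊗ δ_x`, and every identity reduces to
basis vectors. There associativity is the identity `(h l) z (h l)⁻¹ = h (l z l⁻¹) h⁻¹`, and
the module axiom follows from `φ_h(A_y) ⊆ A_{h y h⁻¹}` together with `φ_{g h} = φ_g ∘ φ_h`. -/

section DrinfeldDouble

open Finsupp

variable {G : Type} [Group G] [DecidableEq G] {k : Type} [Field k]

noncomputable def doubleMulₗ : ((G × G) →₀ k) →ₗ[k] ((G × G) →₀ k) →ₗ[k] ((G × G) →₀ k) :=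
  linearCombination k fun p => linearCombination k fun q =>
    if p.2 = q.1 * q.2 * q.1⁻¹ then single (p.1 * q.1, q.2) 1 else 0

theorem doubleMul_eq_doubleMulₗ (f₁ f₂ : (G × G) →₀ k) :
    doubleMul f₁ f₂ = doubleMulₗ f₁ f₂ := by
  simp only [doubleMul, doubleMulₗ, linearCombination_apply, Finsupp.sum, LinearMap.sum_apply,
    LinearMap.smul_apply, Finset.smul_sum]
  refine Finset.sum_congr rfl fun p _ => Finset.sum_congr rfl fun q _ => ?_
  split_ifs <;> simp [mul_comm]

theorem doubleMulₗ_single_single (p q : G × G) (a b : k) :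
    doubleMulₗ (single p a) (single q b) =
      if p.2 = q.1 * q.2 * q.1⁻¹ then single (p.1 * q.1, q.2) (a * b) else 0 := by
  simp only [doubleMulₗ, linearCombination_single, LinearMap.smul_apply]
  split_ifs <;> simp

theorem doubleMul_add_left (f₁ f₂ f₃ : (G × G) →₀ k) :
    doubleMul (f₁ + f₂) f₃ = doubleMul f₁ f₃ + doubleMul f₂ f₃ := by
  simp only [doubleMul_eq_doubleMulₗ, map_add, LinearMap.add_apply]

theorem doubleMul_add_right (f₁ f₂ f₃ : (G × G) →₀ k) :
    doubleMul f₁ (f₂ + f₃) = doubleMul f₁ f₂ + doubleMul f₁ f₃ := by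
  simp only [doubleMul_eq_doubleMulₗ, map_add]

theorem doubleMul_smul_left (c : k) (f₁ f₂ : (G × G) →₀ k) :
    doubleMul (c • f₁) f₂ = c • doubleMul f₁ f₂ := by
  simp only [doubleMul_eq_doubleMulₗ, map_smul, LinearMap.smul_apply]

theorem doubleMul_smul_right (c : k) (f₁ f₂ : (G × G) →₀ k) :
    doubleMul f₁ (c • f₂) = c • doubleMul f₁ f₂ := by
  simp only [doubleMul_eq_doubleMulₗ, map_smul]

theorem doubleMulₗ_assoc_single (p q r : G × G) (a b c : k) :
    doubleMulₗ (doubleMulₗ (single p a) (single q b)) (single r c) =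
      doubleMulₗ (single p a) (doubleMulₗ (single q b) (single r c)) := by
  rw [doubleMulₗ_single_single p q, doubleMulₗ_single_single q r]
  by_cases hqr : q.2 = r.1 * r.2 * r.1⁻¹
  · have hpq : p.2 = q.1 * q.2 * q.1⁻¹ ↔ p.2 = (q.1 * r.1) * r.2 * (q.1 * r.1)⁻¹ := by
      rw [hqr]; group
    rw [if_pos hqr, doubleMulₗ_single_single p]
    simp only [← hpq]
    split_ifs
    · rw [doubleMulₗ_single_single, if_pos hqr, mul_assoc, mul_assoc]
    · rw [map_zero, LinearMap.zero_apply]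
  · rw [if_neg hqr, map_zero]
    split_ifs
    · rw [doubleMulₗ_single_single, if_neg hqr]
    · rw [map_zero, LinearMap.zero_apply]

theorem doubleMul_assoc (f₁ f₂ f₃ : (G × G) →₀ k) :
    doubleMul (doubleMul f₁ f₂) f₃ = doubleMul f₁ (doubleMul f₂ f₃) := by
  simp only [doubleMul_eq_doubleMulₗ]
  induction f₁ using Finsupp.induction_linear with
  | zero => simp
  | add f f' hf hf' => simp [hf, hf']
  | single p a =>
    induction f₂ using Finsupp.induction_linear with
    | zero => simp
    | add f f' hf hf' => simp [hf, hf']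
    | single q b =>
      induction f₃ using Finsupp.induction_linear with
      | zero => simp
      | add f f' hf hf' => simp [hf, hf']
      | single r c => exact doubleMulₗ_assoc_single p q r a b c

variable [Fintype G]

theorem doubleOne_mul (f : (G × G) →₀ k) : doubleMul (doubleOne G k) f = f := by
  rw [doubleMul_eq_doubleMulₗ]
  induction f using Finsupp.induction_linear with
  | zero => simp
  | add f f' hf hf' => simp [hf, hf']
  | single q b => simp [doubleOne, doubleMulₗ_single_single, Finset.sum_ite_eq']

theorem mul_doubleOne (f : (G × G) →₀ k) : doubleMul f (doubleOne G k) = f := by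
  rw [doubleMul_eq_doubleMulₗ]
  induction f using Finsupp.induction_linear with
  | zero => simp
  | add f f' hf hf' => simp [hf, hf']
  | single p a => simp [doubleOne, doubleMulₗ_single_single, Finset.sum_ite_eq]

end DrinfeldDouble

namespace GFrobeniusAlgebra

variable {G : Type} [Group G] [Fintype G] {k : Type} [Field k] [CharZero k]
  {A : Type} [AddCommGroup A] [Module k A] (F : GFrobeniusAlgebra G k A)

theorem proj_φ_proj_of_eq {g x y : G} (h : x = g * y * g⁻¹) (a : A) :
    F.proj x (F.φ g (F.proj y a)) = F.φ g (F.proj y a) :=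
  F.proj_of_mem x _ (h ▸ F.φ_grading g y _ (F.proj_mem y a))

theorem proj_φ_proj_of_ne {g x y : G} (h : x ≠ g * y * g⁻¹) (a : A) :
    F.proj x (F.φ g (F.proj y a)) = 0 :=
  F.proj_of_ne _ x (Ne.symm h) _ (F.φ_grading g y _ (F.proj_mem y a))

end GFrobeniusAlgebra

section DoubleAction

open Finsupp

variable {G : Type} [Group G] [Fintype G] {k : Type} [Field k] [CharZero k]
  {A : Type} [AddCommGroup A] [Module k A] (F : GFrobeniusAlgebra G k A)

noncomputable def doubleActₗ : ((G × G) →₀ k) →ₗ[k] A →ₗ[k] A :=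
  linearCombination k fun p => F.φ p.1 ∘ₗ F.proj p.2

theorem doubleAct_eq_doubleActₗ (f : (G × G) →₀ k) (a : A) :
    doubleAct F f a = doubleActₗ F f a := by
  simp only [doubleAct, doubleActₗ, linearCombination_apply, Finsupp.sum, LinearMap.sum_apply,
    LinearMap.smul_apply, LinearMap.comp_apply]

theorem doubleActₗ_single (p : G × G) (c : k) (a : A) :
    doubleActₗ F (single p c) a = c • F.φ p.1 (F.proj p.2 a) := by
  simp [doubleActₗ]

theorem doubleAct_add_left (f₁ f₂ : (G × G) →₀ k) (a : A) :
    doubleAct F (f₁ + f₂) a = doubleAct F f₁ a + doubleAct F f₂ a := by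
  simp only [doubleAct_eq_doubleActₗ, map_add, LinearMap.add_apply]

theorem doubleAct_add_right (f : (G × G) →₀ k) (a b : A) :
    doubleAct F f (a + b) = doubleAct F f a + doubleAct F f b := by
  simp only [doubleAct_eq_doubleActₗ, map_add]

theorem doubleAct_smul_left (c : k) (f : (G × G) →₀ k) (a : A) :
    doubleAct F (c • f) a = c • doubleAct F f a := by
  simp only [doubleAct_eq_doubleActₗ, map_smul, LinearMap.smul_apply]

theorem doubleAct_smul_right (c : k) (f : (G × G) →₀ k) (a : A) :
    doubleAct F f (c • a) = c • doubleAct F f a := by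
  simp only [doubleAct_eq_doubleActₗ, map_smul]

theorem doubleAct_one (a : A) : doubleAct F (doubleOne G k) a = a := by
  simp [doubleAct_eq_doubleActₗ, doubleOne, doubleActₗ_single, F.φ_one, F.sum_proj]

variable [DecidableEq G]

theorem doubleActₗ_mul_single (p q : G × G) (c d : k) (a : A) :
    doubleActₗ F (doubleMulₗ (single p c) (single q d)) a =
      doubleActₗ F (single p c) (doubleActₗ F (single q d) a) := by
  rw [doubleMulₗ_single_single, doubleActₗ_single, doubleActₗ_single, map_smul, map_smul]
  by_cases h : p.2 = q.1 * q.2 * q.1⁻¹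
  · rw [if_pos h, doubleActₗ_single, F.proj_φ_proj_of_eq h, F.φ_mul, mul_smul,
      LinearMap.comp_apply]
  · rw [if_neg h, F.proj_φ_proj_of_ne h, map_zero, LinearMap.zero_apply, map_zero, smul_zero,
      smul_zero]

theorem doubleAct_mul (f₁ f₂ : (G × G) →₀ k) (a : A) :
    doubleAct F (doubleMul f₁ f₂) a = doubleAct F f₁ (doubleAct F f₂ a) := by
  simp only [doubleMul_eq_doubleMulₗ, doubleAct_eq_doubleActₗ]
  induction f₁ using Finsupp.induction_linear with
  | zero => simp
  | add f f' hf hf' => simp [hf, hf']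
  | single p c =>
    induction f₂ using Finsupp.induction_linear with
    | zero => simp
    | add f f' hf hf' => simp [hf, hf']
    | single q d => exact doubleActₗ_mul_single F p q c d a

end DoubleAction

/-- (i) The Drinfeld double `D(k[G])` is an associative unital `k`-algebra with
unit `Σ_x e⊗δ_x`; (ii) every `G`-Frobenius algebra `A` is a left `D(k[G])`-module under
`(g⊗δ_x)·a := φ_g(a_x)`. -/
theorem drinfeld_double_and_module (G : Type) [Group G] [Fintype G] [DecidableEq G]
    (k : Type) [Field k] [CharZero k] :
    -- (i) `D(k[G])` is an associative unital `k`-algebra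
    ((∀ f₁ f₂ f₃ : (G × G) →₀ k,
        doubleMul (f₁ + f₂) f₃ = doubleMul f₁ f₃ + doubleMul f₂ f₃) ∧
      (∀ f₁ f₂ f₃ : (G × G) →₀ k,
        doubleMul f₁ (f₂ + f₃) = doubleMul f₁ f₂ + doubleMul f₁ f₃) ∧
      (∀ (c : k) (f₁ f₂ : (G × G) →₀ k), doubleMul (c • f₁) f₂ = c • doubleMul f₁ f₂) ∧
      (∀ (c : k) (f₁ f₂ : (G × G) →₀ k), doubleMul f₁ (c • f₂) = c • doubleMul f₁ f₂) ∧
      (∀ f₁ f₂ f₃ : (G × G) →₀ k,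
        doubleMul (doubleMul f₁ f₂) f₃ = doubleMul f₁ (doubleMul f₂ f₃)) ∧
      (∀ f : (G × G) →₀ k, doubleMul (doubleOne G k) f = f) ∧
      (∀ f : (G × G) →₀ k, doubleMul f (doubleOne G k) = f)) ∧
    -- (ii) every `G`-Frobenius algebra is a left `D(k[G])`-module
    (∀ (A : Type) [AddCommGroup A] [Module k A] (F : GFrobeniusAlgebra G k A),
      (∀ (f₁ f₂ : (G × G) →₀ k) (a : A),
        doubleAct F (doubleMul f₁ f₂) a = doubleAct F f₁ (doubleAct F f₂ a)) ∧
      (∀ a : A, doubleAct F (doubleOne G k) a = a) ∧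
      (∀ (f₁ f₂ : (G × G) →₀ k) (a : A),
        doubleAct F (f₁ + f₂) a = doubleAct F f₁ a + doubleAct F f₂ a) ∧
      (∀ (f : (G × G) →₀ k) (a b : A),
        doubleAct F f (a + b) = doubleAct F f a + doubleAct F f b) ∧
      (∀ (c : k) (f : (G × G) →₀ k) (a : A),
        doubleAct F (c • f) a = c • doubleAct F f a) ∧
      (∀ (c : k) (f : (G × G) →₀ k) (a : A),
        doubleAct F f (c • a) = c • doubleAct F f a)) := by
  exact ⟨⟨doubleMul_add_left, doubleMul_add_right, doubleMul_smul_left, doubleMul_smul_right,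
      doubleMul_assoc, doubleOne_mul, mul_doubleOne⟩,
    fun A _ _ F => ⟨doubleAct_mul F, doubleAct_one F, doubleAct_add_left F,
      doubleAct_add_right F, doubleAct_smul_left F, doubleAct_smul_right F⟩⟩
end

section
/- Let A be a G-Frobenius algebra over k that is k[G]-Galois over its untwisted sector A_e as a k[G]-comodule algebra, i.e. for every g ∈ G the k-linear span of the set of products {a·b : a ∈ A_{g⁻¹}, b ∈ A_g} equals A_e. Then A is special: for every g ∈ G there exists an element 1_g ∈ A_g such that A_e·1_g = A_g, and the map A_e → A_g given by a ↦ a·1_g is a k-linear isomorphism (so each twisted sector A_g is a cyclic A_e-module, free of rank one). -/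
/-!
The untwisted sector `A_e` is central (twisted commutativity for `g = e`), hence a commutative
finite-dimensional, so semilocal, `k`-algebra. By the Galois condition the products `c * d` with
`c ∈ A_g`, `d ∈ A_{g⁻¹}` span `A_e`. Since `k` is infinite, no vector space is a finite union of
proper subspaces, so `c` and `d` can be chosen with `c * d` outside every maximal ideal of `A_e`,
i.e. a unit; rescaling `d` gives `c * d = 1`. Then `a ↦ a * c` is injective (multiply by `d`) and
maps `A_e` onto `A_g`, because `x = c * (d * x) = (d * x) * c` with `d * x` central.
-/

theorem exists_isUnit_apply_of_one_mem_span {k R M N : Type*} [Field k] [Infinite k]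
    [CommRing R] [Module k R] [IsScalarTower k R R] [Finite (MaximalSpectrum R)]
    [AddCommGroup M] [Module k M] [AddCommGroup N] [Module k N] (β : M →ₗ[k] N →ₗ[k] R)
    (h : (1 : R) ∈ Submodule.span k (Set.range fun p : M × N => β p.1 p.2)) :
    ∃ m n, IsUnit (β m n) := by
  have one_notMem (P : MaximalSpectrum R) : (1 : R) ∉ P.asIdeal.restrictScalars k :=
    fun h1 => P.isMaximal.ne_top ((Ideal.eq_top_iff_one _).mpr h1)
  obtain ⟨n, hn⟩ := Submodule.exists_forall_notMem_of_forall_ne_top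
    (fun P : MaximalSpectrum R => ⨅ m, (P.asIdeal.restrictScalars k).comap (β m)) fun P htop =>
      one_notMem P <| Submodule.span_le.mpr (by
        rintro _ ⟨⟨m, n⟩, rfl⟩
        have hn : n ∈ (⊤ : Submodule k N) := trivial
        rw [← htop, Submodule.mem_iInf] at hn
        exact hn m) h
  obtain ⟨m, hm⟩ := Submodule.exists_forall_notMem_of_forall_ne_top
    (fun P : MaximalSpectrum R => (P.asIdeal.restrictScalars k).comap (β.flip n)) fun P htop =>
      hn P <| Submodule.mem_iInf _ |>.mpr fun m => by
        have hm : m ∈ (⊤ : Submodule k M) := trivial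
        rwa [← htop] at hm
  refine ⟨m, n, by_contra fun hu => ?_⟩
  obtain ⟨I, hI, hmem⟩ := exists_max_ideal_of_mem_nonunits (mem_nonunits_iff.mpr hu)
  exact hm ⟨I, hI⟩ hmem

namespace GFrobeniusAlgebra

variable {G : Type} [Group G] [Fintype G] {k : Type} [Field k] [CharZero k]
  {A : Type} [AddCommGroup A] [Module k A] (F : GFrobeniusAlgebra G k A)

theorem mul_mem_of_mul_eq {g h gh : G} (hgh : g * h = gh) {a b : A} (ha : a ∈ F.grading g)
    (hb : b ∈ F.grading h) : F.mul a b ∈ F.grading gh :=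
  hgh ▸ F.mul_mem g h a ha b hb

theorem mul_comm_of_mem_one {w : A} (hw : w ∈ F.grading 1) (x : A) :
    F.mul w x = F.mul x w := by
  simpa [F.φ_one] using F.twisted_comm 1 w hw x

@[reducible] def untwistedCommRing : CommRing (F.grading 1) :=
  { (inferInstance : AddCommGroup (F.grading 1)) with
    mul := fun a b => ⟨F.mul a b, F.mul_mem_of_mul_eq (one_mul 1) a.2 b.2⟩
    one := ⟨F.one, F.one_mem⟩
    mul_assoc := fun a b c => Subtype.ext (F.mul_assoc' a b c)
    one_mul := fun a => Subtype.ext (F.one_mul' a)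
    mul_one := fun a => Subtype.ext (F.mul_one' a)
    left_distrib := fun a b c => Subtype.ext (map_add (F.mul a) (b : A) c)
    right_distrib := fun a b c => Subtype.ext (by
      show F.mul (a + b) c = F.mul a c + F.mul b c
      rw [map_add, LinearMap.add_apply])
    zero_mul := fun a => Subtype.ext (by
      show F.mul 0 a = 0
      rw [map_zero, LinearMap.zero_apply])
    mul_zero := fun a => Subtype.ext (map_zero (F.mul (a : A)))
    mul_comm := fun a b => Subtype.ext (F.mul_comm_of_mem_one a.2 (b : A)) }

theorem exists_mul_eq_one_of_one_mem_span {g h : G} (hgh : g * h = 1)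
    (hspan : F.one ∈ Submodule.span k
      {x : A | ∃ a ∈ F.grading g, ∃ b ∈ F.grading h, x = F.mul a b}) :
    ∃ a ∈ F.grading g, ∃ b ∈ F.grading h, F.mul a b = F.one := by
  let _ := F.untwistedCommRing
  have : IsScalarTower k (F.grading 1) (F.grading 1) :=
    ⟨fun r a b => Subtype.ext (by
      show F.mul (r • a) b = r • F.mul a b
      rw [map_smul, LinearMap.smul_apply])⟩
  have := F.finiteDim
  have : IsArtinianRing (F.grading 1) := isArtinian_of_tower k inferInstance
  let β : F.grading g →ₗ[k] F.grading h →ₗ[k] F.grading 1 :=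
    LinearMap.mk₂ k (fun a b => ⟨F.mul a b, F.mul_mem_of_mul_eq hgh a.2 b.2⟩)
      (fun a a' b => Subtype.ext (by simp)) (fun r a b => Subtype.ext (by simp))
      (fun a b b' => Subtype.ext (by simp)) (fun r a b => Subtype.ext (by simp))
  obtain ⟨u, hu, hu1⟩ : F.one ∈ Submodule.map (F.grading 1).subtype
      (Submodule.span k (Set.range fun p : F.grading g × F.grading h => β p.1 p.2)) := by
    rw [← Submodule.span_image]
    convert hspan using 2
    ext x
    constructor
    · rintro ⟨-, ⟨⟨a, b⟩, rfl⟩, rfl⟩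
      exact ⟨a, a.2, b, b.2, rfl⟩
    · rintro ⟨a, ha, b, hb, rfl⟩
      exact ⟨β ⟨a, ha⟩ ⟨b, hb⟩, ⟨(⟨a, ha⟩, ⟨b, hb⟩), rfl⟩, rfl⟩
  obtain rfl : u = 1 := Subtype.ext hu1
  obtain ⟨a, b, hab⟩ := exists_isUnit_apply_of_one_mem_span β hu
  obtain ⟨v, hv⟩ := hab.exists_right_inv
  refine ⟨a, a.2, F.mul b v, F.mul_mem_of_mul_eq (mul_one h) b.2 v.2, ?_⟩
  rw [← F.mul_assoc']
  exact congrArg Subtype.val hv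

theorem injective_mul_right_of_mul_eq_one {c d : A} (hcd : F.mul c d = F.one) :
    Function.Injective fun a => F.mul a c := by
  have cancel (a : A) : F.mul (F.mul a c) d = a := by rw [F.mul_assoc', hcd, F.mul_one']
  intro a a' h
  rw [← cancel a, ← cancel a']
  exact congrArg (F.mul · d) h

theorem image_mul_right_eq_of_mul_eq_one {g : G} {c d : A} (hc : c ∈ F.grading g)
    (hd : d ∈ F.grading g⁻¹) (hcd : F.mul c d = F.one) :
    (fun a => F.mul a c) '' (F.grading 1 : Set A) = F.grading g := by
  refine Set.Subset.antisymm ?_ fun x hx => ?_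
  · rintro _ ⟨a, ha, rfl⟩
    exact F.mul_mem_of_mul_eq (one_mul g) ha hc
  · have hdx : F.mul d x ∈ F.grading 1 := F.mul_mem_of_mul_eq (inv_mul_cancel g) hd hx
    refine ⟨F.mul d x, hdx, ?_⟩
    calc F.mul (F.mul d x) c = F.mul c (F.mul d x) := F.mul_comm_of_mem_one hdx c
      _ = x := by rw [← F.mul_assoc', hcd, F.one_mul']

end GFrobeniusAlgebra

/-- If a `G`-Frobenius algebra `A` is `k[G]`-Galois over its untwisted sector
`A_e` (the span of `A_{g⁻¹}·A_g` equals `A_e` for every `g`), then `A` is special: every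
twisted sector `A_g` has a generator `1_g` with `A_e·1_g = A_g`, and the multiplication map
`A_e → A_g`, `a ↦ a·1_g`, is a `k`-linear isomorphism. -/
theorem galois_implies_special (G : Type) [Group G] [Fintype G]
    (k : Type) [Field k] [CharZero k] (A : Type) [AddCommGroup A] [Module k A]
    (F : GFrobeniusAlgebra G k A)
    (hGalois : ∀ g : G,
      Submodule.span k {x : A | ∃ a ∈ F.grading g⁻¹, ∃ b ∈ F.grading g, x = F.mul a b}
        = F.grading 1) :
    ∀ g : G, ∃ og ∈ F.grading g,
      ((fun a => F.mul a og) '' (F.grading (1 : G) : Set A) = (F.grading g : Set A)) ∧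
      Set.InjOn (fun a => F.mul a og) (F.grading (1 : G) : Set A) := by
  intro g
  have hspan := hGalois g⁻¹
  rw [inv_inv] at hspan
  obtain ⟨c, hc, d, hd, hcd⟩ :=
    F.exists_mul_eq_one_of_one_mem_span (mul_inv_cancel g) (hspan ▸ F.one_mem)
  exact ⟨c, hc, F.image_mul_right_eq_of_mul_eq_one hc hd hcd,
    (F.injective_mul_right_of_mul_eq_one hcd).injOn⟩
end

section
/- Let A be a G-Frobenius algebra over k with trivial character χ ≡ 1 that is k[G]-Galois over A_e (for every g ∈ G the k-linear span of products A_{g⁻¹}·A_g equals A_e), and suppose dim_k A_e = 1. Then there exists a normalized 2-cocycle α on G with values in kˣ and an isomorphism of G-graded unital k-algebras A ≅ k^α[G]. -/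
/-!
Galois-ness together with `A_e = k · 1` makes every graded piece contain a unit: some product
`a b` with `a ∈ A_{g⁻¹}`, `b ∈ A_g` is a nonzero multiple of `1`, and rescaling `a` gives a left
inverse of `b`, which is two-sided because `b a ∈ k · 1`. Multiplying by the inverse identifies
each `A_g` with `k · v_g`, so the `v_g` (with `v_e = 1`) form a basis of `A`. The products
`v_g v_h = α(g,h) v_{gh}` define `α`, associativity of `A` is the cocycle identity, and the
coordinate map of the basis is the required isomorphism onto `k^α[G]`.
-/

noncomputable def twistedMulₗ {G : Type} [Group G] {k : Type} [Field k]
    (α : G → G → kˣ) : (G →₀ k) →ₗ[k] (G →₀ k) →ₗ[k] (G →₀ k) :=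
  Finsupp.lift _ k G fun x => Finsupp.lift (G →₀ k) k G fun y =>
    (α x y : k) • Finsupp.single (x * y) 1

section TwistedGroupRing

variable {G : Type} [Group G] {k : Type} [Field k] (α : G → G → kˣ)

theorem twistedMulₗ_apply (f₁ f₂ : G →₀ k) : twistedMulₗ α f₁ f₂ = twistedMul α f₁ f₂ := by
  rw [twistedMulₗ, Finsupp.lift_apply, LinearMap.finsupp_sum_apply, twistedMul]
  refine Finsupp.sum_congr fun x _ => ?_
  rw [LinearMap.smul_apply, Finsupp.lift_apply, Finsupp.smul_sum]
  refine Finsupp.sum_congr fun y _ => ?_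
  simp only [Finsupp.smul_single, smul_eq_mul, mul_one]
  ring_nf

theorem twistedMulₗ_single_single (g h : G) :
    twistedMulₗ α (Finsupp.single g 1) (Finsupp.single h 1)
      = (α g h : k) • Finsupp.single (g * h) 1 := by
  simp only [twistedMulₗ, Finsupp.lift_apply, Finsupp.sum_single_index, one_smul, zero_smul]

end TwistedGroupRing

namespace GFrobeniusAlgebra

variable {G : Type} [Group G] [Fintype G] {k : Type} [Field k] [CharZero k]
  {A : Type} [AddCommGroup A] [Module k A] (F : GFrobeniusAlgebra G k A)

theorem one_ne_zero_of_finrank_eq_one (hdim : Module.finrank k (F.grading 1) = 1) :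
    F.one ≠ 0 := by
  intro h
  have hbot : F.grading 1 = ⊥ := eq_bot_iff.mpr fun x _ => by
    rw [Submodule.mem_bot, ← F.one_mul' x, h, map_zero, LinearMap.zero_apply]
  rw [hbot, finrank_bot] at hdim
  exact zero_ne_one hdim

theorem span_singleton_one (hdim : Module.finrank k (F.grading 1) = 1) :
    Submodule.span k {F.one} = F.grading 1 := by
  have := F.finiteDim
  apply Submodule.eq_of_le_of_finrank_le
  · rw [Submodule.span_le, Set.singleton_subset_iff]
    exact F.one_mem
  · rw [hdim, finrank_span_singleton (F.one_ne_zero_of_finrank_eq_one hdim)]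

theorem exists_smul_one_eq (hdim : Module.finrank k (F.grading 1) = 1) {x : A}
    (hx : x ∈ F.grading 1) : ∃ c : k, c • F.one = x :=
  Submodule.mem_span_singleton.mp (by rwa [F.span_singleton_one hdim])

theorem mul_mem_grading_one {g h : G} (hgh : g * h = 1) {a b : A} (ha : a ∈ F.grading g)
    (hb : b ∈ F.grading h) : F.mul a b ∈ F.grading 1 :=
  hgh ▸ F.mul_mem g h a ha b hb

theorem left_ne_zero_of_mul_eq_one (hone : F.one ≠ 0) {a b : A} (hab : F.mul a b = F.one) :
    a ≠ 0 := by
  rintro rfl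
  rw [map_zero, LinearMap.zero_apply] at hab
  exact hone hab.symm

theorem mul_eq_one_symm (hdim : Module.finrank k (F.grading 1) = 1) {g : G} {a b : A}
    (ha : a ∈ F.grading g⁻¹) (hb : b ∈ F.grading g) (hab : F.mul a b = F.one) :
    F.mul b a = F.one := by
  obtain ⟨d, hd⟩ := F.exists_smul_one_eq hdim (F.mul_mem_grading_one (mul_inv_cancel g) hb ha)
  have hda : d • a = (1 : k) • a :=
    calc d • a = F.mul a (d • F.one) := by rw [map_smul, F.mul_one']
      _ = F.mul (F.mul a b) a := by rw [hd, F.mul_assoc']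
      _ = (1 : k) • a := by rw [hab, F.one_mul', one_smul]
  have ha0 := F.left_ne_zero_of_mul_eq_one (F.one_ne_zero_of_finrank_eq_one hdim) hab
  rw [← hd, smul_left_injective k ha0 hda, one_smul]

theorem exists_mul_eq_one (hdim : Module.finrank k (F.grading 1) = 1) {g : G}
    (hGalois : Submodule.span k
      {x : A | ∃ a ∈ F.grading g⁻¹, ∃ b ∈ F.grading g, x = F.mul a b} = F.grading 1) :
    ∃ a ∈ F.grading g⁻¹, ∃ b ∈ F.grading g, F.mul a b = F.one := by
  obtain ⟨a, ha, b, hb, hab⟩ : ∃ a ∈ F.grading g⁻¹, ∃ b ∈ F.grading g, F.mul a b ≠ 0 := by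
    by_contra! h
    have hspan : Submodule.span k
        {x : A | ∃ a ∈ F.grading g⁻¹, ∃ b ∈ F.grading g, x = F.mul a b} = ⊥ :=
      Submodule.span_eq_bot.mpr fun x ⟨a, ha, b, hb, hx⟩ => hx ▸ h a ha b hb
    exact F.one_ne_zero_of_finrank_eq_one hdim (by simpa [hGalois ▸ hspan] using F.one_mem)
  obtain ⟨c, hc⟩ := F.exists_smul_one_eq hdim (F.mul_mem_grading_one (inv_mul_cancel g) ha hb)
  have hc0 : c ≠ 0 := by
    rintro rfl
    exact hab (by rw [← hc, zero_smul])
  refine ⟨c⁻¹ • a, Submodule.smul_mem _ _ ha, b, hb, ?_⟩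
  rw [map_smul, LinearMap.smul_apply, ← hc, smul_smul, inv_mul_cancel₀ hc0, one_smul]

theorem exists_homogeneous_units (hdim : Module.finrank k (F.grading 1) = 1)
    (hGalois : ∀ g : G, Submodule.span k
      {x : A | ∃ a ∈ F.grading g⁻¹, ∃ b ∈ F.grading g, x = F.mul a b} = F.grading 1) :
    ∃ v w : G → A, v 1 = F.one ∧ ∀ g, v g ∈ F.grading g ∧ w g ∈ F.grading g⁻¹ ∧
      F.mul (w g) (v g) = F.one ∧ F.mul (v g) (w g) = F.one := by
  classical
  choose w hw v hv hwv using fun g => F.exists_mul_eq_one hdim (hGalois g)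
  refine ⟨Function.update v 1 F.one, Function.update w 1 F.one, by simp, fun g => ?_⟩
  rcases eq_or_ne g 1 with rfl | hg
  · simp [F.one_mem, F.one_mul']
  · simp only [Function.update_of_ne hg]
    exact ⟨hv g, hw g, hwv g, F.mul_eq_one_symm hdim (hw g) (hv g) (hwv g)⟩

variable {F}

theorem grading_eq_span_singleton (hdim : Module.finrank k (F.grading 1) = 1) {g : G} {a b : A}
    (ha : a ∈ F.grading g⁻¹) (hb : b ∈ F.grading g) (hab : F.mul a b = F.one) :
    F.grading g = Submodule.span k {b} := by
  refine le_antisymm (fun x hx => ?_) ((Submodule.span_singleton_le_iff_mem _ _).mpr hb)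
  obtain ⟨t, ht⟩ := F.exists_smul_one_eq hdim (F.mul_mem_grading_one (mul_inv_cancel g) hx ha)
  refine Submodule.mem_span_singleton.mpr ⟨t, ?_⟩
  calc t • b = F.mul (F.mul x a) b := by rw [← ht, map_smul, LinearMap.smul_apply, F.one_mul']
    _ = x := by rw [F.mul_assoc', hab, F.mul_one']

theorem linearIndependent_of_mem_grading {v : G → A} (hv : ∀ g, v g ∈ F.grading g)
    (hne : ∀ g, v g ≠ 0) : LinearIndependent k v := by
  rw [linearIndependent_iff']
  intro s c hsum i hi
  have hproj := congrArg (F.proj i) hsum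
  rw [map_sum, map_zero, Finset.sum_eq_single_of_mem i hi fun j _ hji => by
    rw [map_smul, F.proj_of_ne j i hji _ (hv j), smul_zero], map_smul,
    F.proj_of_mem i _ (hv i)] at hproj
  exact (smul_eq_zero.mp hproj).resolve_right (hne i)

theorem top_le_span_range {v : G → A} (hspan : ∀ g, F.grading g ≤ Submodule.span k {v g}) :
    ⊤ ≤ Submodule.span k (Set.range v) := fun a _ => by
  rw [← F.sum_proj a]
  refine Submodule.sum_mem _ fun g _ => ?_
  exact Submodule.span_mono (Set.singleton_subset_iff.mpr (Set.mem_range_self g))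
    (hspan g (F.proj_mem g a))

theorem exists_unit_mul_eq_smul (hone : F.one ≠ 0) {v w : G → A} (hv : ∀ g, v g ∈ F.grading g)
    (hspan : ∀ g, F.grading g = Submodule.span k {v g})
    (hvw : ∀ g, F.mul (v g) (w g) = F.one) (g h : G) :
    ∃ c : kˣ, F.mul (v g) (v h) = (c : k) • v (g * h) := by
  obtain ⟨c, hc⟩ :=
    Submodule.mem_span_singleton.mp (hspan (g * h) ▸ F.mul_mem g h _ (hv g) _ (hv h))
  have hc0 : c ≠ 0 := by
    rintro rfl
    apply hone
    calc F.one = F.mul (F.mul (v g) (v h)) (F.mul (w h) (w g)) := by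
          rw [F.mul_assoc', ← F.mul_assoc' (v h), hvw, F.one_mul', hvw]
      _ = 0 := by rw [← hc, zero_smul, map_zero, LinearMap.zero_apply]
  exact ⟨Units.mk0 c hc0, hc.symm⟩

variable {v : G → A} {α : G → G → kˣ}

theorem cocycle_of_mul_eq_smul (hα : ∀ g h, F.mul (v g) (v h) = (α g h : k) • v (g * h))
    (hne : ∀ g, v g ≠ 0) (g h l : G) :
    α g h * α (g * h) l = α h l * α g (h * l) := by
  refine Units.ext (smul_left_injective k (hne (g * h * l)) ?_)
  calc ((α g h * α (g * h) l : kˣ) : k) • v (g * h * l)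
      = F.mul (F.mul (v g) (v h)) (v l) := by
        rw [hα, map_smul, LinearMap.smul_apply, hα, smul_smul, Units.val_mul]
    _ = F.mul (v g) (F.mul (v h) (v l)) := F.mul_assoc' _ _ _
    _ = ((α h l * α g (h * l) : kˣ) : k) • v (g * h * l) := by
        rw [hα h l, map_smul, hα, smul_smul, Units.val_mul, mul_assoc]

theorem one_one_eq_one_of_mul_eq_smul (hone : F.one ≠ 0)
    (hα : ∀ g h, F.mul (v g) (v h) = (α g h : k) • v (g * h)) (hv1 : v 1 = F.one) :
    α 1 1 = 1 := by
  refine Units.ext (smul_left_injective k hone ?_)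
  calc (α 1 1 : k) • F.one = F.mul (v 1) (v 1) := by rw [hα, mul_one, hv1]
    _ = ((1 : kˣ) : k) • F.one := by rw [hv1, F.one_mul', Units.val_one, one_smul]

theorem repr_mul (B : Module.Basis G k A)
    (hα : ∀ g h, F.mul (B g) (B h) = (α g h : k) • B (g * h)) (x y : A) :
    B.repr (F.mul x y) = twistedMul α (B.repr x) (B.repr y) := by
  have hmul : F.mul.compr₂ (B.repr : A →ₗ[k] G →₀ k)
      = (twistedMulₗ α).compl₁₂ (B.repr : A →ₗ[k] G →₀ k) (B.repr : A →ₗ[k] G →₀ k) :=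
    B.ext fun g => B.ext fun h => by simp [hα, twistedMulₗ_single_single]
  rw [← twistedMulₗ_apply]
  exact LinearMap.congr_fun₂ hmul x y

end GFrobeniusAlgebra

theorem one_dimensional_galois_is_twisted_group_ring_general (G : Type) [Group G] [Fintype G]
    (k : Type) [Field k] [CharZero k] (A : Type) [AddCommGroup A] [Module k A]
    (F : GFrobeniusAlgebra G k A)
    (hGalois : ∀ g : G,
      Submodule.span k {x : A | ∃ a ∈ F.grading g⁻¹, ∃ b ∈ F.grading g, x = F.mul a b}
        = F.grading 1)
    (hdim : Module.finrank k (F.grading (1 : G)) = 1) :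
    ∃ α : G → G → kˣ,
      (∀ g h l : G, α g h * α (g * h) l = α h l * α g (h * l)) ∧
      α 1 1 = 1 ∧
      ∃ Φ : A ≃ₗ[k] (G →₀ k),
        Φ F.one = Finsupp.single 1 1 ∧
        (∀ x y : A, Φ (F.mul x y) = twistedMul α (Φ x) (Φ y)) ∧
        (∀ g : G, Submodule.map (Φ : A →ₗ[k] (G →₀ k)) (F.grading g)
            = Submodule.span k {Finsupp.single g (1 : k)}) := by
  obtain ⟨v, w, hv1, hunits⟩ := F.exists_homogeneous_units hdim hGalois
  choose hv hw hwv hvw using hunits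
  have hone := F.one_ne_zero_of_finrank_eq_one hdim
  have hspan g := GFrobeniusAlgebra.grading_eq_span_singleton hdim (hw g) (hv g) (hwv g)
  have hne g := F.left_ne_zero_of_mul_eq_one hone (hvw g)
  let B := Module.Basis.mk (GFrobeniusAlgebra.linearIndependent_of_mem_grading hv hne)
    (GFrobeniusAlgebra.top_le_span_range fun g => (hspan g).le)
  have hB : ∀ g, B g = v g := Module.Basis.mk_apply _ _
  have hrepr : ∀ g, B.repr (v g) = Finsupp.single g 1 := fun g => by rw [← hB, B.repr_self]
  choose α hα using GFrobeniusAlgebra.exists_unit_mul_eq_smul hone hv hspan hvw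
  refine ⟨α, GFrobeniusAlgebra.cocycle_of_mul_eq_smul hα hne,
    GFrobeniusAlgebra.one_one_eq_one_of_mul_eq_smul hone hα hv1, B.repr, ?_,
    GFrobeniusAlgebra.repr_mul B (by simpa only [hB] using hα), fun g => ?_⟩
  · rw [← hv1, hrepr]
  · rw [hspan g, Submodule.map_span, Set.image_singleton, LinearEquiv.coe_coe, hrepr]

/-- If a `G`-Frobenius algebra `A` with trivial character is `k[G]`-Galois over
`A_e` and `dim_k A_e = 1`, then there is a normalized 2-cocycle `α : G × G → kˣ` and an
isomorphism of `G`-graded unital `k`-algebras `A ≅ k^α[G]`. -/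
theorem one_dimensional_galois_is_twisted_group_ring (G : Type) [Group G] [Fintype G]
    (k : Type) [Field k] [CharZero k] (A : Type) [AddCommGroup A] [Module k A]
    (F : GFrobeniusAlgebra G k A)
    (hχ : ∀ g : G, F.χ g = 1)
    (hGalois : ∀ g : G,
      Submodule.span k {x : A | ∃ a ∈ F.grading g⁻¹, ∃ b ∈ F.grading g, x = F.mul a b}
        = F.grading 1)
    (hdim : Module.finrank k (F.grading (1 : G)) = 1) :
    ∃ α : G → G → kˣ,
      (∀ g h l : G, α g h * α (g * h) l = α h l * α g (h * l)) ∧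
      α 1 1 = 1 ∧
      ∃ Φ : A ≃ₗ[k] (G →₀ k),
        Φ F.one = Finsupp.single 1 1 ∧
        (∀ x y : A, Φ (F.mul x y) = twistedMul α (Φ x) (Φ y)) ∧
        (∀ g : G, Submodule.map (Φ : A →ₗ[k] (G →₀ k)) (F.grading g)
            = Submodule.span k {Finsupp.single g (1 : k)}) :=
  one_dimensional_galois_is_twisted_group_ring_general G k A F hGalois hdim
end

section
/- Let (G, A, ∘, 1, η, φ, χ) be a G-Frobenius algebra over k and let μ be a normalized 2-cocycle on G with values in kˣ. Define λ(g,h) := μ(g,h)·μ(g*h*g⁻¹, g)⁻¹, and define the twisted structures: a ∘^μ b := μ(g,h)·(a ∘ b) for a ∈ A_g, b ∈ A_h; η^μ(a,b) := μ(g,g⁻¹)·η(a,b) for a ∈ A_g, b ∈ A_{g⁻¹}; and φ^λ_g(a) := λ(g,h)·φ_g(a) for a ∈ A_h. Then (G, A, ∘^μ, 1, η^μ, φ^λ, χ) is again a G-Frobenius algebra. -/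
namespace TwistAux12
section
variable {G : Type} [Group G] {k : Type} [Field k]
variable (m : G → G → k)

lemma sc1l' (hm : ∀ g h l : G, m g h * m (g*h) l = m h l * m g (h*l))
    (hne : ∀ g h : G, m g h ≠ 0) (hnorm : m 1 1 = 1) (h : G) : m 1 h = 1 := by
  have := hm 1 1 h
  simp only [one_mul] at this
  rw [hnorm, one_mul] at this
  exact (mul_right_cancel₀ (hne 1 h) ((one_mul (m 1 h)).trans this)).symm

lemma sc1r' (hm : ∀ g h l : G, m g h * m (g*h) l = m h l * m g (h*l))
    (hne : ∀ g h : G, m g h ≠ 0) (hnorm : m 1 1 = 1) (g : G) : m g 1 = 1 := by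
  have := hm g 1 1
  simp only [mul_one, one_mul] at this
  rw [hnorm, one_mul] at this
  exact mul_right_cancel₀ (hne g 1) (this.trans (one_mul _).symm)

lemma sc_lcoc (hm : ∀ g h l : G, m g h * m (g*h) l = m h l * m g (h*l))
    (hne : ∀ g h : G, m g h ≠ 0) (a b h : G) :
    m (a*b) h * m (a*(b*h*b⁻¹)*a⁻¹) a * m (b*h*b⁻¹) b
      = m a (b*h*b⁻¹) * m b h * m (a*b*h*(a*b)⁻¹) (a*b) := by
  have E1 := hm a b h
  have E2 := hm (a*(b*h*b⁻¹)*a⁻¹) a b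
  have E3 := hm a (b*h*b⁻¹) b
  simp only [mul_assoc, mul_inv_rev, inv_inv, mul_inv_cancel_left, inv_mul_cancel_left,
    mul_inv_cancel, inv_mul_cancel, one_mul, mul_one] at E1 E2 E3 ⊢
  have key : (m (a*b) h * (m (a*(b*(h*(b⁻¹*a⁻¹)))) a * m (b*(h*b⁻¹)) b))
        * (m a b * m (a*(b*(h*b⁻¹))) b)
      = (m a (b*(h*b⁻¹)) * (m b h * m (a*(b*(h*(b⁻¹*a⁻¹)))) (a*b)))
        * (m a b * m (a*(b*(h*b⁻¹))) b) := by
    linear_combination (m (b*(h*b⁻¹)) b * m (a*(b*(h*(b⁻¹*a⁻¹)))) (a*b) * m a b) * E1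
      + (m (a*b) h * m (b*(h*b⁻¹)) b * m a b) * E2
      - (m b h * m (a*(b*(h*(b⁻¹*a⁻¹)))) (a*b) * m a b) * E3
  exact mul_right_cancel₀ (mul_ne_zero (hne a b) (hne (a*(b*(h*b⁻¹))) b)) key

lemma sc_metric (hm : ∀ g h l : G, m g h * m (g*h) l = m h l * m g (h*l))
    (hne : ∀ g h : G, m g h ≠ 0) (hnorm : m 1 1 = 1) (g h : G) :
    m g h * m g h⁻¹ * m (g*h*g⁻¹) (g*h⁻¹*g⁻¹)
      = m h h⁻¹ * m (g*h*g⁻¹) g * m (g*h⁻¹*g⁻¹) g := by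
  have E1 := hm (g*h*g⁻¹) (g*h⁻¹*g⁻¹) g
  have E2 := hm (g*h*g⁻¹) g h⁻¹
  have E3 := hm g h h⁻¹
  simp only [mul_assoc, mul_inv_rev, inv_inv, mul_inv_cancel_left, inv_mul_cancel_left,
    mul_inv_cancel, inv_mul_cancel, one_mul, mul_one] at E1 E2 E3 ⊢
  rw [sc1l' m hm hne hnorm, mul_one] at E1
  rw [sc1r' m hm hne hnorm, mul_one] at E3
  linear_combination (m g h * m g h⁻¹) * E1 - (m g h * m (g*(h⁻¹*g⁻¹)) g) * E2
    + (m (g*(h*g⁻¹)) g * m (g*(h⁻¹*g⁻¹)) g) * E3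

lemma sc_alg (hm : ∀ g h l : G, m g h * m (g*h) l = m h l * m g (h*l))
    (g h h' : G) :
    m h h' * m g (h*h') * m (g*h*g⁻¹) g * m (g*h'*g⁻¹) g
      = m g h * m g h' * m (g*h*g⁻¹) (g*h'*g⁻¹) * m (g*(h*h')*g⁻¹) g := by
  have E1 := hm g h h'
  have E2 := hm (g*h*g⁻¹) (g*h'*g⁻¹) g
  have E3 := hm (g*h*g⁻¹) g h'
  simp only [mul_assoc, mul_inv_rev, inv_inv, mul_inv_cancel_left, inv_mul_cancel_left,
    mul_inv_cancel, inv_mul_cancel, one_mul, mul_one] at E1 E2 E3 ⊢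
  linear_combination (-(m (g*(h*g⁻¹)) g * m (g*(h'*g⁻¹)) g)) * E1
    + (m (g*(h'*g⁻¹)) g * m g h) * E3 - (m g h * m g h') * E2

lemma sc_trace (hm : ∀ g h l : G, m g h * m (g*h) l = m h l * m g (h*l))
    (hne : ∀ g h : G, m g h ≠ 0) (hnorm : m 1 1 = 1) (g h : G) :
    m h g * m (g*h*g⁻¹*h⁻¹) (h*g*h⁻¹) * m h g⁻¹
      = m (h*g*h⁻¹) h * m (g*h*g⁻¹*h⁻¹) h * m g⁻¹ (g*h*g⁻¹) := by
  have E1 := hm (g*h*g⁻¹*h⁻¹) (h*g*h⁻¹) h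
  have E2 := hm (g*h*g⁻¹*h⁻¹) h g
  have E3 := hm g⁻¹ (g*h*g⁻¹) g
  have E4 := hm h g⁻¹ g
  have E5 := hm g⁻¹ g h
  simp only [mul_assoc, mul_inv_rev, inv_inv, mul_inv_cancel_left, inv_mul_cancel_left,
    mul_inv_cancel, inv_mul_cancel, one_mul, mul_one] at E1 E2 E3 E4 E5 ⊢
  rw [sc1r' m hm hne hnorm, mul_one] at E4
  rw [sc1l' m hm hne hnorm, mul_one] at E5
  have key : (m h g * (m (g*(h*(g⁻¹*h⁻¹))) (h*(g*h⁻¹)) * m h g⁻¹)) * (m g h * m g⁻¹ (g*h))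
      = (m (h*(g*h⁻¹)) h * (m (g*(h*(g⁻¹*h⁻¹))) h * m g⁻¹ (g*(h*g⁻¹)))) * (m g h * m g⁻¹ (g*h)) := by
    linear_combination (m h g * m h g⁻¹ * m g⁻¹ (g*h)) * E1
      - (m h g⁻¹ * m (h*(g*h⁻¹)) h * m g⁻¹ (g*h)) * E2
      - (m h g⁻¹ * m (h*(g*h⁻¹)) h * m (g*(h*(g⁻¹*h⁻¹))) h) * E3
      + (m (h*(g*h⁻¹)) h * m (g*(h*(g⁻¹*h⁻¹))) h * m g⁻¹ (g*(h*g⁻¹))) * E4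
      + (m (h*(g*h⁻¹)) h * m (g*(h*(g⁻¹*h⁻¹))) h * m g⁻¹ (g*(h*g⁻¹))) * E5
  have h2 := mul_right_cancel₀ (mul_ne_zero (hne g h) (hne g⁻¹ (g*h))) key
  linear_combination h2
end

section
variable {G : Type} [Group G] {k : Type} [Field k]
variable (μ : G → G → kˣ) (lam : G → G → kˣ)

lemma u_cocycle (hcoc : ∀ g h l : G, μ g h * μ (g * h) l = μ h l * μ g (h * l)) :
    ∀ g h l : G, ((μ g h : k)) * (μ (g*h) l : k) = (μ h l : k) * (μ g (h*l) : k) :=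
  fun g h l => by exact_mod_cast congrArg Units.val (hcoc g h l)

lemma u_ne (g h : G) : ((μ g h : k)) ≠ 0 := Units.ne_zero _

lemma u_norm (hnorm : μ 1 1 = 1) : ((μ 1 1 : kˣ) : k) = 1 := by
  rw [hnorm]; rfl

lemma u1l (hcoc : ∀ g h l : G, μ g h * μ (g * h) l = μ h l * μ g (h * l))
    (hnorm : μ 1 1 = 1) (h : G) : ((μ 1 h : kˣ) : k) = 1 :=
  sc1l' (fun g h => ((μ g h : kˣ) : k)) (u_cocycle μ hcoc) (u_ne μ) (u_norm μ hnorm) h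

lemma u1r (hcoc : ∀ g h l : G, μ g h * μ (g * h) l = μ h l * μ g (h * l))
    (hnorm : μ 1 1 = 1) (g : G) : ((μ g 1 : kˣ) : k) = 1 :=
  sc1r' (fun g h => ((μ g h : kˣ) : k)) (u_cocycle μ hcoc) (u_ne μ) (u_norm μ hnorm) g

section
variable (hcoc : ∀ g h l : G, μ g h * μ (g * h) l = μ h l * μ g (h * l))
  (hnorm : μ 1 1 = 1)
  (hlam : ∀ g h : G, lam g h = μ g h * (μ (g * h * g⁻¹) g)⁻¹)
include hcoc hnorm hlam

lemma lam_spec (g h : G) :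
    ((lam g h : kˣ) : k) * ((μ (g*h*g⁻¹) g : kˣ) : k) = ((μ g h : kˣ) : k) := by
  rw [hlam, Units.val_mul, Units.val_inv_eq_inv_val]
  field_simp

lemma lam_one_left (h : G) : ((lam 1 h : kˣ) : k) = 1 := by
  have e : (1:G) * h * 1⁻¹ = h := by group
  rw [hlam, e, Units.val_mul, Units.val_inv_eq_inv_val, u1l μ hcoc hnorm,
    u1r μ hcoc hnorm]
  norm_num

lemma lam_one_right (g : G) : ((lam g 1 : kˣ) : k) = 1 := by
  have e : g * 1 * g⁻¹ = (1:G) := by group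
  rw [hlam, e, Units.val_mul, Units.val_inv_eq_inv_val, u1l μ hcoc hnorm,
    u1r μ hcoc hnorm]
  norm_num

lemma lam_diag (g : G) : ((lam g g : kˣ) : k) = 1 := by
  have e : g * g * g⁻¹ = g := by group
  rw [hlam, e, Units.val_mul, Units.val_inv_eq_inv_val]
  field_simp

lemma lam_coc (a b h : G) :
    ((lam (a*b) h : kˣ) : k) = ((lam a (b*h*b⁻¹) : kˣ) : k) * ((lam b h : kˣ) : k) := by
  rw [hlam, hlam, hlam]
  push_cast [Units.val_inv_eq_inv_val]
  have key := sc_lcoc (fun g h => ((μ g h : kˣ) : k)) (u_cocycle μ hcoc) (u_ne μ) a b h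
  field_simp
  linear_combination key

lemma lam_metric (g h : G) :
    ((lam g h : kˣ) : k) * ((lam g h⁻¹ : kˣ) : k) * ((μ (g*h*g⁻¹) (g*h*g⁻¹)⁻¹ : kˣ) : k)
      = ((μ h h⁻¹ : kˣ) : k) := by
  have e : (g*h*g⁻¹)⁻¹ = g*h⁻¹*g⁻¹ := by group
  have e2 : g * h⁻¹ * g⁻¹ = g * h⁻¹ * g⁻¹ := rfl
  rw [e, hlam, hlam]
  push_cast [Units.val_inv_eq_inv_val]
  have key := sc_metric (fun g h => ((μ g h : kˣ) : k)) (u_cocycle μ hcoc) (u_ne μ)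
    (u_norm μ hnorm) g h
  field_simp
  linear_combination key

lemma lam_alg (g h h' : G) :
    ((μ h h' : kˣ) : k) * ((lam g (h*h') : kˣ) : k)
      = ((lam g h : kˣ) : k) * ((lam g h' : kˣ) : k) * ((μ (g*h*g⁻¹) (g*h'*g⁻¹) : kˣ) : k) := by
  rw [hlam, hlam, hlam]
  push_cast [Units.val_inv_eq_inv_val]
  have key := sc_alg (fun g h => ((μ g h : kˣ) : k)) (u_cocycle μ hcoc) g h h'
  field_simp
  linear_combination key

lemma lam_trace (g h : G) :
    ((lam h g : kˣ) : k) * ((μ (g*h*g⁻¹*h⁻¹) (h*g*h⁻¹) : kˣ) : k)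
      = ((μ (g*h*g⁻¹*h⁻¹) h : kˣ) : k) * ((lam g⁻¹ (g*h*g⁻¹) : kˣ) : k) := by
  have e : g⁻¹ * (g*h*g⁻¹) * g⁻¹⁻¹ = h := by group
  rw [hlam, hlam, e]
  push_cast [Units.val_inv_eq_inv_val]
  have key := sc_trace (fun g h => ((μ g h : kˣ) : k)) (u_cocycle μ hcoc) (u_ne μ)
    (u_norm μ hnorm) g h
  field_simp
  linear_combination key

end
end

section Defs
variable {G : Type} [Group G] [Fintype G] {k : Type} [Field k] [CharZero k]
  {A : Type} [AddCommGroup A] [Module k A]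

/-- the twisted multiplication -/
noncomputable def tmul (F : GFrobeniusAlgebra G k A) (μ : G → G → kˣ) :
    A →ₗ[k] A →ₗ[k] A :=
  ∑ g : G, ∑ h : G, ((μ g h : kˣ) : k) • (F.mul.compl₁₂ (F.proj g) (F.proj h))

/-- the twisted metric -/
noncomputable def teta (F : GFrobeniusAlgebra G k A) (μ : G → G → kˣ) :
    A →ₗ[k] A →ₗ[k] k :=
  ∑ g : G, ((μ g g⁻¹ : kˣ) : k) • (F.η.compl₁₂ (F.proj g) (F.proj g⁻¹))

/-- the twisted G-action -/
noncomputable def tphi (F : GFrobeniusAlgebra G k A) (lam : G → G → kˣ) (g : G) :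
    A →ₗ[k] A :=
  ∑ h : G, ((lam g h : kˣ) : k) • ((F.φ g) ∘ₗ (F.proj h))

open Classical in
lemma proj_hom (F : GFrobeniusAlgebra G k A) {g : G} {a : A} (ha : a ∈ F.grading g)
    (h : G) : F.proj h a = if h = g then a else 0 := by
  split_ifs with hh
  · subst hh; exact F.proj_of_mem h a ha
  · exact F.proj_of_ne g h (fun e => hh e.symm) a ha

lemma tmul_hom (F : GFrobeniusAlgebra G k A) (μ : G → G → kˣ) {g h : G} {a b : A}
    (ha : a ∈ F.grading g) (hb : b ∈ F.grading h) :
    tmul F μ a b = ((μ g h : kˣ) : k) • F.mul a b := by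
  unfold tmul
  simp only [LinearMap.sum_apply, LinearMap.smul_apply, LinearMap.compl₁₂_apply]
  rw [Finset.sum_eq_single g]
  · rw [Finset.sum_eq_single h]
    · rw [F.proj_of_mem g a ha, F.proj_of_mem h b hb]
    · intro h' _ hne
      rw [F.proj_of_ne h h' (fun e => hne e.symm) b hb]
      simp
    · intro habs; exact absurd (Finset.mem_univ h) habs
  · intro g' _ hne
    rw [F.proj_of_ne g g' (fun e => hne e.symm) a ha]
    simp
  · intro habs; exact absurd (Finset.mem_univ g) habs

lemma teta_hom (F : GFrobeniusAlgebra G k A) (μ : G → G → kˣ) {g : G} {a : A}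
    (ha : a ∈ F.grading g) (b : A) :
    teta F μ a b = ((μ g g⁻¹ : kˣ) : k) * F.η a (F.proj g⁻¹ b) := by
  unfold teta
  simp only [LinearMap.sum_apply, LinearMap.smul_apply, LinearMap.compl₁₂_apply,
    smul_eq_mul]
  rw [Finset.sum_eq_single g]
  · rw [F.proj_of_mem g a ha]
  · intro g' _ hne
    rw [F.proj_of_ne g g' (fun e => hne e.symm) a ha]
    simp
  · intro habs; exact absurd (Finset.mem_univ g) habs

lemma tphi_hom (F : GFrobeniusAlgebra G k A) (lam : G → G → kˣ) (g : G) {h : G} {a : A}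
    (ha : a ∈ F.grading h) :
    tphi F lam g a = ((lam g h : kˣ) : k) • F.φ g a := by
  unfold tphi
  simp only [LinearMap.sum_apply, LinearMap.smul_apply, LinearMap.comp_apply]
  rw [Finset.sum_eq_single h]
  · rw [F.proj_of_mem h a ha]
  · intro h' _ hne
    rw [F.proj_of_ne h h' (fun e => hne e.symm) a ha]
    simp
  · intro habs; exact absurd (Finset.mem_univ h) habs

/-- eta only pairs opposite degrees -/
lemma eta_proj (F : GFrobeniusAlgebra G k A) {g : G} {a : A} (ha : a ∈ F.grading g)
    (b : A) : F.η a (F.proj g⁻¹ b) = F.η a b := by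
  conv_rhs => rw [← F.sum_proj b]
  rw [map_sum]
  rw [Finset.sum_eq_single g⁻¹]
  · intro h _ hne
    exact F.η_graded g h (fun e => hne ((inv_eq_of_mul_eq_one_right e).symm)) a ha _
      (F.proj_mem h b)
  · intro habs; exact absurd (Finset.mem_univ g⁻¹) habs

/-- reduction of bilinear identities to homogeneous components -/
lemma bilin_ext (F : GFrobeniusAlgebra G k A) {M : Type} [AddCommMonoid M] [Module k M]
    (f₁ f₂ : A →ₗ[k] A →ₗ[k] M)
    (H : ∀ g h : G, ∀ a ∈ F.grading g, ∀ b ∈ F.grading h, f₁ a b = f₂ a b) (a b : A) :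
    f₁ a b = f₂ a b := by
  rw [← F.sum_proj a, ← F.sum_proj b]
  simp only [map_sum, LinearMap.sum_apply]
  exact Finset.sum_congr rfl fun g _ => Finset.sum_congr rfl fun h _ =>
    H h g _ (F.proj_mem h a) _ (F.proj_mem g b)

lemma lin_ext (F : GFrobeniusAlgebra G k A) {M : Type} [AddCommMonoid M] [Module k M]
    (f₁ f₂ : A →ₗ[k] M)
    (H : ∀ g : G, ∀ a ∈ F.grading g, f₁ a = f₂ a) (a : A) : f₁ a = f₂ a := by
  rw [← F.sum_proj a]
  simp only [map_sum]
  exact Finset.sum_congr rfl fun g _ => H g _ (F.proj_mem g a)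

end Defs
end TwistAux12

open TwistAux12

/-- Twisting a `G`-Frobenius algebra by a normalized 2-cocycle `μ` with values
in `kˣ`, with `λ(g,h) := μ(g,h)·μ(g*h*g⁻¹,g)⁻¹`, i.e. re-scaling the multiplication by
`μ(g,h)` on `A_g ⊗ A_h`, the metric by `μ(g,g⁻¹)` on `A_g ⊗ A_{g⁻¹}` and the `G`-action by
`λ(g,h)` on `A_h`, again yields a `G`-Frobenius algebra (same grading, unit, and character). -/
theorem twist_is_GFrobenius (G : Type) [Group G] [Fintype G]
    (k : Type) [Field k] [CharZero k] (A : Type) [AddCommGroup A] [Module k A]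
    (F : GFrobeniusAlgebra G k A) (μ : G → G → kˣ)
    (hcoc : ∀ g h l : G, μ g h * μ (g * h) l = μ h l * μ g (h * l))
    (hnorm : μ 1 1 = 1)
    (lam : G → G → kˣ) (hlam : ∀ g h : G, lam g h = μ g h * (μ (g * h * g⁻¹) g)⁻¹) :
    ∃ F' : GFrobeniusAlgebra G k A,
      F'.grading = F.grading ∧
      F'.proj = F.proj ∧
      F'.one = F.one ∧
      F'.χ = F.χ ∧
      (∀ (g h : G), ∀ a ∈ F.grading g, ∀ b ∈ F.grading h,
        F'.mul a b = ((μ g h : kˣ) : k) • F.mul a b) ∧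
      (∀ g : G, ∀ a ∈ F.grading g, ∀ b ∈ F.grading g⁻¹,
        F'.η a b = ((μ g g⁻¹ : kˣ) : k) * F.η a b) ∧
      (∀ (g h : G), ∀ a ∈ F.grading h,
        F'.φ g a = ((lam g h : kˣ) : k) • F.φ g a) := by
  classical
  have hmk := u_cocycle (k := k) μ hcoc
  have hone : ∀ h : G, ((μ 1 h : kˣ) : k) = 1 := u1l μ hcoc hnorm
  have honer : ∀ g : G, ((μ g 1 : kˣ) : k) = 1 := u1r μ hcoc hnorm
  have hspec := lam_spec μ lam hcoc hnorm hlam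
  have hl1 := lam_one_left μ lam hcoc hnorm hlam
  have hlr := lam_one_right μ lam hcoc hnorm hlam
  have hld := lam_diag μ lam hcoc hnorm hlam
  have hlc := lam_coc μ lam hcoc hnorm hlam
  have hlm := lam_metric μ lam hcoc hnorm hlam
  have hla := lam_alg μ lam hcoc hnorm hlam
  have hlt := lam_trace μ lam hcoc hnorm hlam
  refine ⟨{
    grading := F.grading
    proj := F.proj
    proj_mem := F.proj_mem
    proj_of_mem := F.proj_of_mem
    proj_of_ne := F.proj_of_ne
    sum_proj := F.sum_proj
    finiteDim := F.finiteDim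
    mul := tmul F μ
    mul_assoc' := by
      intro a b c
      refine bilin_ext F ((tmul F μ).compr₂ ((tmul F μ).flip c))
        ((tmul F μ).compl₂ ((tmul F μ).flip c)) ?_ a b
      intro g h a' ha' b' hb'
      simp only [LinearMap.compr₂_apply, LinearMap.compl₂_apply, LinearMap.flip_apply]
      refine lin_ext F (tmul F μ (tmul F μ a' b')) ((tmul F μ a').comp (tmul F μ b')) ?_ c
      intro l c' hc'
      simp only [LinearMap.comp_apply]
      rw [tmul_hom F μ ha' hb', map_smul, LinearMap.smul_apply,
        tmul_hom F μ (F.mul_mem g h a' ha' b' hb') hc',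
        tmul_hom F μ hb' hc', map_smul,
        tmul_hom F μ ha' (F.mul_mem h l b' hb' c' hc'),
        smul_smul, smul_smul, F.mul_assoc']
      congr 1
      exact hmk g h l
    one := F.one
    one_mem := F.one_mem
    one_mul' := by
      intro a
      conv_lhs => rw [← F.sum_proj a]
      conv_rhs => rw [← F.sum_proj a]
      rw [map_sum]
      refine Finset.sum_congr rfl fun h _ => ?_
      rw [tmul_hom F μ F.one_mem (F.proj_mem h a), F.one_mul', hone h, one_smul]
    mul_one' := by
      intro a
      conv_lhs => rw [← F.sum_proj a]
      conv_rhs => rw [← F.sum_proj a]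
      rw [map_sum, LinearMap.sum_apply]
      refine Finset.sum_congr rfl fun h _ => ?_
      rw [tmul_hom F μ (F.proj_mem h a) F.one_mem, F.mul_one', honer h, one_smul]
    mul_mem := by
      intro g h a ha b hb
      rw [tmul_hom F μ ha hb]
      exact Submodule.smul_mem _ _ (F.mul_mem g h a ha b hb)
    η := teta F μ
    η_nondeg := by
      intro a ha
      apply F.η_nondeg
      intro c
      set B : A := ∑ h : G, (((μ h⁻¹ h : kˣ) : k))⁻¹ • F.proj h c with hBdef
      have hB : ∀ g : G, F.proj g⁻¹ B = (((μ g g⁻¹ : kˣ) : k))⁻¹ • F.proj g⁻¹ c := by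
        intro g
        rw [hBdef, map_sum, Finset.sum_eq_single g⁻¹]
        · rw [map_smul, F.proj_of_mem g⁻¹ _ (F.proj_mem g⁻¹ c), inv_inv]
        · intro h _ hne
          rw [map_smul, F.proj_of_ne h g⁻¹ (fun e => hne e) _ (F.proj_mem h c), smul_zero]
        · intro habs; exact absurd (Finset.mem_univ _) habs
      have hcomp : teta F μ a B = F.η a c := by
        unfold teta
        simp only [LinearMap.sum_apply, LinearMap.smul_apply, LinearMap.compl₁₂_apply,
          smul_eq_mul]
        have step : ∀ g : G, ((μ g g⁻¹ : kˣ) : k) * F.η (F.proj g a) (F.proj g⁻¹ B)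
            = F.η (F.proj g a) c := by
          intro g
          rw [hB g, map_smul, smul_eq_mul, ← mul_assoc,
            mul_inv_cancel₀ (u_ne (k := k) μ g g⁻¹), one_mul,
            eta_proj F (F.proj_mem g a) c]
        rw [Finset.sum_congr rfl (fun g _ => step g)]
        have := congrArg (fun x => F.η x c) (F.sum_proj a)
        simpa only [map_sum, LinearMap.sum_apply] using this
      rw [← hcomp]
      exact ha B
    η_graded := by
      intro g h hgh a ha b hb
      rw [teta_hom F μ ha b, proj_hom F hb g⁻¹,
        if_neg (fun e : g⁻¹ = h => hgh (by rw [← e, mul_inv_cancel]))]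
      simp
    η_invariant := by
      intro a b c
      refine bilin_ext F ((tmul F μ).compr₂ (teta F μ a))
        ((teta F μ).comp (tmul F μ a)) ?_ b c
      intro h l b' hb' c' hc'
      simp only [LinearMap.compr₂_apply, LinearMap.comp_apply]
      refine lin_ext F (((teta F μ).flip (tmul F μ b' c')))
        (((teta F μ).flip c').comp ((tmul F μ).flip b')) ?_ a
      intro g a' ha'
      simp only [LinearMap.comp_apply, LinearMap.flip_apply]
      rw [tmul_hom F μ hb' hc', map_smul, smul_eq_mul,
        teta_hom F μ ha' _, proj_hom F (F.mul_mem h l b' hb' c' hc') g⁻¹,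
        tmul_hom F μ ha' hb', map_smul, LinearMap.smul_apply, smul_eq_mul,
        teta_hom F μ (F.mul_mem g h a' ha' b' hb') c', proj_hom F hc' (g*h)⁻¹]
      by_cases hcase : g⁻¹ = h * l
      · have hc2 : (g*h)⁻¹ = l := by rw [mul_inv_rev, hcase, inv_mul_cancel_left]
        rw [if_pos hcase, if_pos hc2, F.η_invariant a' b' c']
        have E := hmk g h l
        rw [← hcase] at E
        rw [hc2]
        linear_combination (-(F.η (F.mul a' b') c')) * E
      · have hc2 : ¬((g*h)⁻¹ = l) :=
          fun e => hcase (by rw [← e, mul_inv_rev, mul_inv_cancel_left])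
        rw [if_neg hcase, if_neg hc2]
        simp
    φ := tphi F lam
    φ_one := by
      apply LinearMap.ext
      intro a
      refine lin_ext F (tphi F lam 1) LinearMap.id ?_ a
      intro h a' ha'
      rw [tphi_hom F lam 1 ha', hl1 h, one_smul, F.φ_one]
    φ_mul := by
      intro g h
      apply LinearMap.ext; intro a
      refine lin_ext F (tphi F lam (g*h)) ((tphi F lam g).comp (tphi F lam h)) ?_ a
      intro x a' ha'
      rw [LinearMap.comp_apply, tphi_hom F lam (g*h) ha', tphi_hom F lam h ha', map_smul,
        tphi_hom F lam g (F.φ_grading h x a' ha'), F.φ_mul g h, smul_smul,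
        LinearMap.comp_apply, hlc g h x, mul_comm]
    φ_algebra := by
      intro g a b
      refine bilin_ext F ((tmul F μ).compr₂ (tphi F lam g))
        ((tmul F μ).compl₁₂ (tphi F lam g) (tphi F lam g)) ?_ a b
      intro h h' a' ha' b' hb'
      simp only [LinearMap.compr₂_apply, LinearMap.compl₁₂_apply]
      rw [tmul_hom F μ ha' hb', tphi_hom F lam g ha', tphi_hom F lam g hb']
      simp only [map_smul, LinearMap.smul_apply, smul_smul]
      rw [tphi_hom F lam g (F.mul_mem h h' a' ha' b' hb'),
        tmul_hom F μ (F.φ_grading g h a' ha') (F.φ_grading g h' b' hb'),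
        F.φ_algebra, smul_smul, smul_smul]
      congr 1
      linear_combination hla g h h'
    φ_unit := by
      intro g
      rw [tphi_hom F lam g F.one_mem, hlr g, one_smul, F.φ_unit]
    φ_grading := by
      intro g h a ha
      rw [tphi_hom F lam g ha]
      exact Submodule.smul_mem _ _ (F.φ_grading g h a ha)
    χ := F.χ
    twisted_comm := by
      intro g a ha b
      refine lin_ext F (tmul F μ a) (((tmul F μ).flip a).comp (tphi F lam g)) ?_ b
      intro h b' hb'
      simp only [LinearMap.comp_apply, LinearMap.flip_apply]
      rw [tmul_hom F μ ha hb', F.twisted_comm g a ha b', tphi_hom F lam g hb',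
        map_smul, LinearMap.smul_apply,
        tmul_hom F μ (F.φ_grading g h b' hb') ha, smul_smul]
      congr 1
      linear_combination (hspec g h).symm
    self_invariance := by
      intro g a ha
      rw [tphi_hom F lam g ha, hld g, one_smul]
      exact F.self_invariance g a ha
    metric_invariance := by
      intro g a b
      refine bilin_ext F ((teta F μ).compl₁₂ (tphi F lam g) (tphi F lam g))
        (((((F.χ g)⁻¹ : kˣ) : k)^2) • teta F μ) ?_ a b
      intro h h' a' ha' b' hb'
      simp only [LinearMap.compl₁₂_apply, LinearMap.smul_apply, smul_eq_mul]
      rw [tphi_hom F lam g ha', tphi_hom F lam g hb']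
      simp only [map_smul, LinearMap.smul_apply, smul_smul]
      rw [teta_hom F μ (F.φ_grading g h a' ha'),
        proj_hom F (F.φ_grading g h' b' hb') (g*h*g⁻¹)⁻¹,
        teta_hom F μ ha' b', proj_hom F hb' h⁻¹]
      by_cases hcase : h' = h⁻¹
      · subst hcase
        have e1 : (g*h*g⁻¹)⁻¹ = g*h⁻¹*g⁻¹ := by group
        rw [if_pos e1, if_pos rfl, F.metric_invariance g a' b']
        simp only [smul_eq_mul]
        linear_combination ((((F.χ g)⁻¹ : kˣ) : k)^2 * F.η a' b') * hlm g h
      · have e1 : ¬((g*h*g⁻¹)⁻¹ = g*h'*g⁻¹) := by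
          intro e
          rw [show (g*h*g⁻¹)⁻¹ = g*h⁻¹*g⁻¹ from by group] at e
          exact hcase (mul_left_cancel (mul_right_cancel e)).symm
        rw [if_neg e1, if_neg (fun e : h⁻¹ = h' => hcase e.symm)]
        simp
    trace_axiom := by
      intro g h c hc
      have e : (g*h*g⁻¹*h⁻¹)*h = g*h*g⁻¹ := by group
      have hL : (F.proj g ∘ₗ tmul F μ c ∘ₗ tphi F lam h ∘ₗ F.proj g)
          = (((lam h g : kˣ) : k) * ((μ (g*h*g⁻¹*h⁻¹) (h*g*h⁻¹) : kˣ) : k)) •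
            (F.proj g ∘ₗ F.mul c ∘ₗ F.φ h ∘ₗ F.proj g) := by
        apply LinearMap.ext; intro x
        simp only [LinearMap.comp_apply, LinearMap.smul_apply]
        rw [tphi_hom F lam h (F.proj_mem g x), map_smul,
          tmul_hom F μ hc (F.φ_grading h g _ (F.proj_mem g x)),
          map_smul, map_smul, smul_smul]
      have hR : (F.proj h ∘ₗ tphi F lam g⁻¹ ∘ₗ tmul F μ c ∘ₗ F.proj h)
          = (((μ (g*h*g⁻¹*h⁻¹) h : kˣ) : k) * ((lam g⁻¹ (g*h*g⁻¹) : kˣ) : k)) •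
            (F.proj h ∘ₗ F.φ g⁻¹ ∘ₗ F.mul c ∘ₗ F.proj h) := by
        apply LinearMap.ext; intro x
        simp only [LinearMap.comp_apply, LinearMap.smul_apply]
        have hmem : F.mul c (F.proj h x) ∈ F.grading (g*h*g⁻¹) :=
          e ▸ F.mul_mem _ _ _ hc _ (F.proj_mem h x)
        rw [tmul_hom F μ hc (F.proj_mem h x), map_smul,
          tphi_hom F lam g⁻¹ hmem, map_smul, map_smul, smul_smul, mul_comm]
      rw [hL, hR, map_smul, map_smul, smul_eq_mul, smul_eq_mul]
      have TA := F.trace_axiom g h c hc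
      linear_combination (((lam h g : kˣ) : k) * ((μ (g*h*g⁻¹*h⁻¹) (h*g*h⁻¹) : kˣ) : k)) * TA
        + (((F.χ g⁻¹ : kˣ) : k) *
            (LinearMap.trace k A (F.proj h ∘ₗ F.φ g⁻¹ ∘ₗ F.mul c ∘ₗ F.proj h))) * hlt g h
  }, rfl, rfl, rfl, rfl, ?_, ?_, ?_⟩
  · intro g h a ha b hb
    exact tmul_hom F μ ha hb
  · intro g a ha b hb
    rw [teta_hom F μ ha b, F.proj_of_mem g⁻¹ b hb]
  · intro g h a ha
    exact tphi_hom F lam g ha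
end
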